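/- arXiv:1512.05698 — 6 statements merged into one kernel-verified Lean document; each statement's English description precedes it below -/
import Mathlib

section
/- For every n ≥ 2 with N = ⌊n/2⌋, every function g : Z × Z → ℝ and all points z_1,...,z_n ∈ Z, the following Hoeffding representation holds: (1/(n(n−1))) Σ_{i≠j} g(z_i, z_j) = (1/n!) Σ_π (1/N) Σ_{i=1}^N g(z_{π(i)}, z_{π(N+i)}), where the outer sum on the right-hand side is taken over all permutations π of the set {1,...,n}. -/
/-- **Hoeffding representation of a `U`-statistic.**
For every `n ≥ 2` with `N = ⌊n/2⌋`, every function `g : Z × Z → ℝ` and all points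
`z_1, …, z_n ∈ Z`,
`(1/(n(n−1))) ∑_{i ≠ j} g(z_i, z_j)
  = (1/n!) ∑_π (1/N) ∑_{i=1}^N g(z_{π(i)}, z_{π(N+i)})`,
where the outer sum on the right-hand side is over all permutations `π` of `{1, …, n}`
and the left-hand sum is over all ordered pairs of distinct indices. -/
theorem hoeffding_representation
    {Z : Type*} (n : ℕ) (hn : 2 ≤ n) (N : ℕ) (hN : N = n / 2)
    (g : Z × Z → ℝ) (z : Fin n → Z) :
    (1 / ((n : ℝ) * ((n : ℝ) - 1))) *
        ∑ i : Fin n, ∑ j : Fin n, (if i ≠ j then g (z i, z j) else 0) =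
      (1 / (n.factorial : ℝ)) * ∑ π : Equiv.Perm (Fin n),
        (1 / (N : ℝ)) * ∑ i : Fin N,
          g (z (π ⟨i.1, by have := i.isLt; omega⟩),
             z (π ⟨N + i.1, by have := i.isLt; omega⟩)) := by
  classical
  have hN1 : 1 ≤ N := by omega
  set S : ℝ := ∑ i : Fin n, ∑ j : Fin n, (if i ≠ j then g (z i, z j) else 0) with hS
  -- the key invariance: the permutation sum does not depend on the distinct pair
  have key : ∀ a b a' b' : Fin n, a ≠ b → a' ≠ b' →
      (∑ π : Equiv.Perm (Fin n), g (z (π a'), z (π b'))) =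
      ∑ π : Equiv.Perm (Fin n), g (z (π a), z (π b)) := by
    intro a b a' b' hab hab'
    have hca : Equiv.swap a a' b' ≠ a := by
      intro h
      have h2 : Equiv.swap a a' b' = Equiv.swap a a' a' := by
        rw [h, Equiv.swap_apply_right]
      exact hab' (((Equiv.swap a a').injective h2).symm)
    set σ : Equiv.Perm (Fin n) :=
      Equiv.swap b (Equiv.swap a a' b') * Equiv.swap a a' with hσ
    have hσa : σ a' = a := by
      rw [hσ, Equiv.Perm.mul_apply, Equiv.swap_apply_right,
        Equiv.swap_apply_of_ne_of_ne hab (Ne.symm hca)]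
    have hσb : σ b' = b := by
      rw [hσ, Equiv.Perm.mul_apply, Equiv.swap_apply_right]
    refine (Fintype.sum_equiv (Equiv.mulRight σ) _ _ fun π => ?_).symm
    simp [Equiv.Perm.mul_apply, hσa, hσb]
  have h0 : (0 : ℕ) < n := by omega
  have h1 : (1 : ℕ) < n := by omega
  have h01 : (⟨0, h0⟩ : Fin n) ≠ ⟨1, h1⟩ := by simp [Fin.ext_iff]
  set T : ℝ := ∑ π : Equiv.Perm (Fin n), g (z (π ⟨0, h0⟩), z (π ⟨1, h1⟩)) with hT
  -- counting: `∑_{a≠b} T = n(n-1) T`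
  have hcount : ∑ a : Fin n, ∑ b : Fin n, (if a ≠ b then T else 0)
      = (n : ℝ) * ((n : ℝ) - 1) * T := by
    have e1 : ∀ a : Fin n, ∑ b : Fin n, (if a ≠ b then T else 0)
        = ((n : ℝ) - 1) * T := by
      intro a
      have e : ∀ b : Fin n, (if a ≠ b then T else 0) = T - (if a = b then T else 0) := by
        intro b; by_cases h : a = b <;> simp [h]
      simp_rw [e]
      rw [Finset.sum_sub_distrib, Finset.sum_const, Finset.sum_ite_eq,
        if_pos (Finset.mem_univ a)]
      simp only [Finset.card_univ, Fintype.card_fin, nsmul_eq_mul]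
      ring
    simp_rw [e1, Finset.sum_const, Finset.card_univ, Fintype.card_fin, nsmul_eq_mul]
    ring
  -- double counting: `∑_{a≠b} T = n! * S`
  have hsum : ∑ a : Fin n, ∑ b : Fin n, (if a ≠ b then T else 0)
      = (n.factorial : ℝ) * S := by
    have h1' : ∀ a b : Fin n, (if a ≠ b then T else 0) =
        ∑ π : Equiv.Perm (Fin n), (if a ≠ b then g (z (π a), z (π b)) else 0) := by
      intro a b
      by_cases hab : a ≠ b
      · rw [if_pos hab]
        simp only [if_pos hab]
        exact key a b ⟨0, h0⟩ ⟨1, h1⟩ hab h01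
      · rw [if_neg hab]
        symm
        simp [if_neg hab]
    calc ∑ a : Fin n, ∑ b : Fin n, (if a ≠ b then T else 0)
        = ∑ a : Fin n, ∑ b : Fin n, ∑ π : Equiv.Perm (Fin n),
            (if a ≠ b then g (z (π a), z (π b)) else 0) := by
          simp_rw [h1']
      _ = ∑ π : Equiv.Perm (Fin n), ∑ a : Fin n, ∑ b : Fin n,
            (if a ≠ b then g (z (π a), z (π b)) else 0) := by
          rw [show (∑ a : Fin n, ∑ b : Fin n, ∑ π : Equiv.Perm (Fin n),
              (if a ≠ b then g (z (π a), z (π b)) else 0))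
              = ∑ a : Fin n, ∑ π : Equiv.Perm (Fin n), ∑ b : Fin n,
              (if a ≠ b then g (z (π a), z (π b)) else 0) from
            Finset.sum_congr rfl fun a _ => Finset.sum_comm]
          exact Finset.sum_comm
      _ = ∑ _π : Equiv.Perm (Fin n), S := by
          refine Finset.sum_congr rfl fun π _ => ?_
          rw [hS]
          refine Fintype.sum_equiv π _ _ fun a => ?_
          refine Fintype.sum_equiv π _ _ fun b => ?_
          simp [π.injective.ne_iff]
      _ = (n.factorial : ℝ) * S := by
          simp [Finset.sum_const, Finset.card_univ, Fintype.card_perm, nsmul_eq_mul]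
  have hTS : (n : ℝ) * ((n : ℝ) - 1) * T = (n.factorial : ℝ) * S := by
    rw [← hcount, hsum]
  -- simplify the RHS
  have hRHS : (1 / (n.factorial : ℝ)) * ∑ π : Equiv.Perm (Fin n),
        (1 / (N : ℝ)) * ∑ i : Fin N,
          g (z (π ⟨i.1, by have := i.isLt; omega⟩),
             z (π ⟨N + i.1, by have := i.isLt; omega⟩))
      = (1 / (n.factorial : ℝ)) * T := by
    congr 1
    rw [← Finset.mul_sum, Finset.sum_comm]
    have e2 : ∀ i : Fin N,
        (∑ π : Equiv.Perm (Fin n),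
          g (z (π ⟨i.1, by have := i.isLt; omega⟩),
             z (π ⟨N + i.1, by have := i.isLt; omega⟩))) = T := by
      intro i
      refine key ⟨0, h0⟩ ⟨1, h1⟩ _ _ h01 ?_
      have := i.isLt
      simp only [Ne, Fin.ext_iff]
      omega
    simp_rw [e2]
    rw [Finset.sum_const, Finset.card_univ, Fintype.card_fin, nsmul_eq_mul]
    have hN0 : (N : ℝ) ≠ 0 := by positivity
    field_simp
  rw [hRHS]
  have hfa : (0 : ℝ) < (n.factorial : ℝ) := by positivity
  have hn0 : (0 : ℝ) < (n : ℝ) := by positivity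
  have hn1 : (0 : ℝ) < (n : ℝ) - 1 := by
    have : (2 : ℝ) ≤ (n : ℝ) := by exact_mod_cast hn
    linarith
  rw [div_mul_eq_mul_div, div_mul_eq_mul_div, one_mul, one_mul,
    div_eq_div_iff (by positivity) (by positivity)]
  linarith [hTS]
end

section
/- Suppose Assumption 4 holds (m ≥ 2, n ≥ 4). Then P( (1/2)·max(C, 6) > max(Ĉ, 6) ) ≤ 1/m². -/
open MeasureTheory ProbabilityTheory

noncomputable section

section AuxLemmas

lemma aux_exp_bound {x : ℝ} (hx : 0 ≤ x) : Real.exp (-x) ≤ 1 - x + x^2/2 := by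
  set g : ℝ → ℝ := fun y => 1 - y + y^2/2 - Real.exp (-y) with hg
  have hderiv : ∀ z : ℝ, HasDerivAt g (-1 + z + Real.exp (-z)) z := by
    intro z
    have h1 : HasDerivAt (fun y : ℝ => Real.exp (-y)) (Real.exp (-z) * (-1)) z :=
      (Real.hasDerivAt_exp (-z)).comp z ((hasDerivAt_id z).neg)
    have h2 : HasDerivAt (fun y : ℝ => 1 - y + y^2/2) (-1 + z) z := by
      have := (((hasDerivAt_id z).const_sub 1).add (((hasDerivAt_pow 2 z)).div_const 2))
      exact this.congr_deriv (by norm_num)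
    have := h2.sub h1
    exact this.congr_deriv (by ring)
  have hmono : MonotoneOn g (Set.Ici (0:ℝ)) := by
    apply monotoneOn_of_deriv_nonneg (convex_Ici 0)
    · exact (Continuous.continuousOn (by fun_prop))
    · intro z hz
      exact (hderiv z).differentiableAt.differentiableWithinAt
    · intro z hz
      rw [(hderiv z).deriv]
      have := Real.add_one_le_exp (-z)
      linarith
  have h0 : g 0 = 0 := by simp [hg]
  have := hmono (Set.self_mem_Ici) (Set.mem_Ici.2 hx) hx
  rw [h0] at this
  simp only [hg] at this
  linarith

lemma aux_perm_exists {α : Type*} [DecidableEq α] {x y u v : α} (hxy : x ≠ y) (huv : u ≠ v) :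
    ∃ τ : Equiv.Perm α, τ x = u ∧ τ y = v := by
  set a := Equiv.swap x u y with ha
  have hau : a ≠ u := by
    intro h
    apply hxy
    have := congrArg (Equiv.swap x u) h
    rw [Equiv.swap_apply_self, Equiv.swap_apply_right] at this
    exact this.symm ▸ rfl
  refine ⟨(Equiv.swap a v) * (Equiv.swap x u), ?_, ?_⟩
  · rw [Equiv.Perm.mul_apply, Equiv.swap_apply_left, Equiv.swap_apply_of_ne_of_ne hau.symm huv]
  · rw [Equiv.Perm.mul_apply, ← ha, Equiv.swap_apply_left]

def pA {n : ℕ} (i : Fin (n/2)) : Fin n := ⟨2*i.1, by have := i.2; omega⟩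
def pB {n : ℕ} (i : Fin (n/2)) : Fin n := ⟨2*i.1+1, by have := i.2; omega⟩

lemma pA_ne_pB {n : ℕ} (i j : Fin (n/2)) : pA i ≠ pB j := by
  simp only [pA, pB, ne_eq, Fin.mk.injEq]
  omega

lemma pA_inj {n : ℕ} {i j : Fin (n/2)} (h : pA (n := n) i = pA j) : i = j := by
  simp only [pA, Fin.mk.injEq] at h
  exact Fin.ext (by omega)

lemma pB_inj {n : ℕ} {i j : Fin (n/2)} (h : pB (n := n) i = pB j) : i = j := by
  simp only [pB, Fin.mk.injEq] at h
  exact Fin.ext (by omega)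

lemma aux_key2 {n : ℕ} (g : Fin n → Fin n → ℝ) {s t s' t' : Fin n}
    (hst : s ≠ t) (hst' : s' ≠ t') :
    ∑ π : Equiv.Perm (Fin n), g (π s) (π t) = ∑ π : Equiv.Perm (Fin n), g (π s') (π t') := by
  obtain ⟨τ, hτ1, hτ2⟩ := aux_perm_exists hst' hst
  calc ∑ π : Equiv.Perm (Fin n), g (π s) (π t)
      = ∑ π : Equiv.Perm (Fin n), g ((π * τ) s') ((π * τ) t') := by
        refine Finset.sum_congr rfl fun π _ => ?_
        rw [Equiv.Perm.mul_apply, Equiv.Perm.mul_apply, hτ1, hτ2]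
    _ = ∑ π : Equiv.Perm (Fin n), g (π s') (π t') :=
        Equiv.sum_comp (Equiv.mulRight τ) (fun π => g (π s') (π t'))

lemma aux_perm_avg {n : ℕ} (hn : 4 ≤ n) (g : Fin n → Fin n → ℝ) :
    (1 / ((n : ℝ) * ((n : ℝ) - 1))) * ∑ a : Fin n, ∑ b : Fin n, (if a ≠ b then g a b else 0)
    = ((n.factorial : ℝ))⁻¹ * ∑ π : Equiv.Perm (Fin n),
        (((n / 2 : ℕ) : ℝ))⁻¹ * ∑ i : Fin (n / 2), g (π (pA i)) (π (pB i)) := by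
  classical
  set r : ℕ := n / 2 with hr
  have hr2 : 2 ≤ r := by omega
  set S : ℝ := ∑ a : Fin n, ∑ b : Fin n, (if a ≠ b then g a b else 0) with hS
  set A : ℝ := ∑ π : Equiv.Perm (Fin n), g (π (pA ⟨0, by omega⟩)) (π (pB ⟨0, by omega⟩)) with hA
  -- each pair sum equals A
  have hpair : ∀ i : Fin r, ∑ π : Equiv.Perm (Fin n), g (π (pA i)) (π (pB i)) = A :=
    fun i => aux_key2 g (pA_ne_pB i i) (pA_ne_pB _ _)
  -- any off-diagonal pair sum equals A
  have hoff : ∀ s t : Fin n, s ≠ t → ∑ π : Equiv.Perm (Fin n), g (π s) (π t) = A :=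
    fun s t hst => aux_key2 g hst (pA_ne_pB _ _)
  -- blockcount
  have hblock : ∀ π : Equiv.Perm (Fin n),
      ∑ s : Fin n, ∑ t : Fin n, (if s ≠ t then g (π s) (π t) else 0) = S := by
    intro π
    have h1 : ∀ s t : Fin n, (if s ≠ t then g (π s) (π t) else 0)
        = (fun a b => if a ≠ b then g a b else 0) (π s) (π t) := by
      intro s t
      simp only [ne_eq, EmbeddingLike.apply_eq_iff_eq]
    simp_rw [h1]
    rw [hS]
    calc ∑ s : Fin n, ∑ t : Fin n, (fun a b => if a ≠ b then g a b else 0) (π s) (π t)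
        = ∑ s : Fin n, ∑ t : Fin n, (fun a b => if a ≠ b then g a b else 0) (π s) t := by
          refine Finset.sum_congr rfl fun s _ => ?_
          exact Equiv.sum_comp π ((fun a b => if a ≠ b then g a b else 0) (π s))
      _ = ∑ s : Fin n, ∑ t : Fin n, (if s ≠ t then g s t else 0) :=
          Equiv.sum_comp π (fun s => ∑ t : Fin n, (if s ≠ t then g s t else 0))
  -- T two ways
  have hT : ((n:ℝ) * ((n:ℝ) - 1)) * A = (n.factorial : ℝ) * S := by
    have lhs_eq : ∑ s : Fin n, ∑ t : Fin n,
        (if s ≠ t then (∑ π : Equiv.Perm (Fin n), g (π s) (π t)) else 0)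
        = ((n:ℝ) * ((n:ℝ) - 1)) * A := by
      have : ∀ s : Fin n, ∑ t : Fin n,
          (if s ≠ t then (∑ π : Equiv.Perm (Fin n), g (π s) (π t)) else 0)
          = ((n:ℝ) - 1) * A := by
        intro s
        have h2 : ∀ t : Fin n, (if s ≠ t then (∑ π : Equiv.Perm (Fin n), g (π s) (π t)) else 0)
            = (if s ≠ t then A else 0) := by
          intro t
          by_cases h : s ≠ t
          · simp only [h, if_true, hoff s t h]
          · simp [h]
        simp_rw [h2]
        rw [← Finset.sum_filter, Finset.sum_const]
        have hcard : (Finset.univ.filter (fun t : Fin n => s ≠ t)).card = n - 1 := by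
          have : Finset.univ.filter (fun t : Fin n => s ≠ t) = Finset.univ.erase s := by
            ext t
            simp [ne_comm, eq_comm]
          rw [this, Finset.card_erase_of_mem (Finset.mem_univ s), Finset.card_univ,
            Fintype.card_fin]
        rw [hcard, nsmul_eq_mul, Nat.cast_sub (by omega), Nat.cast_one]
      simp_rw [this]
      rw [Finset.sum_const, Finset.card_univ, Fintype.card_fin, nsmul_eq_mul]
      ring
    have rhs_eq : ∑ s : Fin n, ∑ t : Fin n,
        (if s ≠ t then (∑ π : Equiv.Perm (Fin n), g (π s) (π t)) else 0)
        = (n.factorial : ℝ) * S := by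
      have h3 : ∀ s t : Fin n, (if s ≠ t then (∑ π : Equiv.Perm (Fin n), g (π s) (π t)) else 0)
          = ∑ π : Equiv.Perm (Fin n), (if s ≠ t then g (π s) (π t) else 0) := by
        intro s t
        by_cases h : s ≠ t
        · simp [h]
        · simp [h]
      simp_rw [h3]
      have h4 : ∀ s : Fin n, ∑ t : Fin n, ∑ π : Equiv.Perm (Fin n),
          (if s ≠ t then g (π s) (π t) else 0)
          = ∑ π : Equiv.Perm (Fin n), ∑ t : Fin n, (if s ≠ t then g (π s) (π t) else 0) :=
        fun s => Finset.sum_comm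
      simp_rw [h4]
      rw [Finset.sum_comm]
      simp_rw [hblock]
      rw [Finset.sum_const, Finset.card_univ, Fintype.card_perm, Fintype.card_fin, nsmul_eq_mul]
    rw [← lhs_eq, rhs_eq]
  -- conclude
  have hsum : ∑ π : Equiv.Perm (Fin n),
      (((r : ℕ) : ℝ))⁻¹ * ∑ i : Fin r, g (π (pA i)) (π (pB i)) = A := by
    rw [← Finset.mul_sum, Finset.sum_comm]
    simp_rw [hpair]
    rw [Finset.sum_const, Finset.card_univ, Fintype.card_fin, nsmul_eq_mul]
    rw [← mul_assoc, inv_mul_cancel₀ (by positivity : ((r:ℕ):ℝ) ≠ 0), one_mul]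
  rw [hsum]
  have hn1 : (0:ℝ) < (n:ℝ) * ((n:ℝ) - 1) := by
    have : (4:ℝ) ≤ (n:ℝ) := by exact_mod_cast hn
    nlinarith
  have hfac : (0:ℝ) < (n.factorial : ℝ) := by exact_mod_cast Nat.factorial_pos n
  field_simp
  rw [div_eq_iff (ne_of_gt (by have : (4:ℝ) ≤ n := (by exact_mod_cast hn); linarith))]
  linear_combination -hT

lemma aux_iIndepFun_pair {Ω ι κ β : Type*} [MeasurableSpace Ω] {P : Measure Ω}
    [IsProbabilityMeasure P] [mβ : MeasurableSpace β]
    {Z : ι → Ω → β} (hZm : ∀ i, Measurable (Z i))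
    (hZi : iIndepFun Z P)
    (a b : κ → ι) (hab : ∀ k, a k ≠ b k)
    (hd : ∀ k l, k ≠ l → a k ≠ a l ∧ a k ≠ b l ∧ b k ≠ a l ∧ b k ≠ b l) :
    iIndepFun (fun k ω => (Z (a k) ω, Z (b k) ω)) P := by
  classical
  rw [iIndepFun_iff_iIndep]
  set pr : κ → Ω → β × β := fun k ω => (Z (a k) ω, Z (b k) ω) with hpr
  set PS : κ → Set (Set Ω) := fun k =>
    {s | ∃ A B : Set β, MeasurableSet A ∧ MeasurableSet B ∧
      s = Z (a k) ⁻¹' A ∩ Z (b k) ⁻¹' B} with hPS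
  refine iIndepSets.iIndep (fun k => Measurable.comap_le ((hZm (a k)).prodMk (hZm (b k))))
    PS (fun k => ?_) (fun k => ?_) ?_
  · -- pi system
    rintro s ⟨A, B, hA, hB, rfl⟩ t ⟨A', B', hA', hB', rfl⟩ -
    exact ⟨A ∩ A', B ∩ B', hA.inter hA', hB.inter hB', by
      simp only [Set.preimage_inter]
      ext ω
      simp only [Set.mem_inter_iff, Set.mem_preimage]
      tauto⟩
  · -- generates
    rw [← generateFrom_prod, MeasurableSpace.comap_generateFrom]
    congr 1
    ext s
    simp only [Set.mem_image, Set.mem_image2, Set.mem_setOf_eq, hPS]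
    constructor
    · rintro ⟨t, ⟨A, hA, B, hB, rfl⟩, rfl⟩
      exact ⟨A, B, hA, hB, rfl⟩
    · rintro ⟨A, B, hA, hB, rfl⟩
      exact ⟨A ×ˢ B, ⟨A, hA, B, hB, rfl⟩, rfl⟩
  · -- iIndepSets
    rw [iIndepSets_iff]
    intro S f hf
    have hf' : ∀ k : κ, ∃ A B : Set β, MeasurableSet A ∧ MeasurableSet B ∧
        (k ∈ S → f k = Z (a k) ⁻¹' A ∩ Z (b k) ⁻¹' B) := by
      intro k
      by_cases hk : k ∈ S
      · obtain ⟨A, B, hA, hB, hEq⟩ := hf k hk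
        exact ⟨A, B, hA, hB, fun _ => hEq⟩
      · exact ⟨Set.univ, Set.univ, MeasurableSet.univ, MeasurableSet.univ, fun h => absurd h hk⟩
    choose A B hAm hBm hEq using hf'
    set T : Finset ι := S.biUnion (fun k => {a k, b k}) with hT
    set g : ι → Set Ω := fun i => ⋂ k ∈ S,
      ((if i = a k then Z i ⁻¹' (A k) else Set.univ) ∩
       (if i = b k then Z i ⁻¹' (B k) else Set.univ)) with hg
    have haT : ∀ k ∈ S, a k ∈ T := fun k hk => Finset.mem_biUnion.2 ⟨k, hk, by simp⟩
    have hbT : ∀ k ∈ S, b k ∈ T := fun k hk => Finset.mem_biUnion.2 ⟨k, hk, by simp⟩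
    -- F1
    have hga : ∀ k₀ ∈ S, g (a k₀) = Z (a k₀) ⁻¹' (A k₀) := by
      intro k₀ hk₀
      ext ω
      simp only [hg, Set.mem_iInter, Set.mem_inter_iff]
      constructor
      · intro h
        have := (h k₀ hk₀).1
        rwa [if_pos rfl, Set.mem_preimage] at this
      · intro h k hk
        constructor
        · split_ifs with h1
          · rcases eq_or_ne k₀ k with rfl | hne
            · exact h
            · exact absurd h1 (hd k₀ k hne).1
          · trivial
        · split_ifs with h1
          · rcases eq_or_ne k₀ k with rfl | hne
            · exact absurd h1 (hab k₀)
            · exact absurd h1 (hd k₀ k hne).2.1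
          · trivial
    have hgb : ∀ k₀ ∈ S, g (b k₀) = Z (b k₀) ⁻¹' (B k₀) := by
      intro k₀ hk₀
      ext ω
      simp only [hg, Set.mem_iInter, Set.mem_inter_iff]
      constructor
      · intro h
        have := (h k₀ hk₀).2
        rwa [if_pos rfl, Set.mem_preimage] at this
      · intro h k hk
        constructor
        · split_ifs with h1
          · rcases eq_or_ne k₀ k with rfl | hne
            · exact absurd h1 (hab k₀).symm
            · exact absurd h1 (hd k₀ k hne).2.2.1
          · trivial
        · split_ifs with h1
          · rcases eq_or_ne k₀ k with rfl | hne
            · exact h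
            · exact absurd h1 (hd k₀ k hne).2.2.2
          · trivial
    -- F2
    have hgmeas : ∀ i ∈ T, MeasurableSet[mβ.comap (Z i)] (g i) := by
      intro i _
      apply MeasurableSet.biInter S.countable_toSet
      intro k _
      apply MeasurableSet.inter
      · split_ifs
        · exact ⟨A k, hAm k, rfl⟩
        · exact ⟨Set.univ, MeasurableSet.univ, by simp⟩
      · split_ifs
        · exact ⟨B k, hBm k, rfl⟩
        · exact ⟨Set.univ, MeasurableSet.univ, by simp⟩
    -- F3
    have hInter : ⋂ i ∈ T, g i = ⋂ k ∈ S, f k := by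
      ext ω
      simp only [Set.mem_iInter]
      constructor
      · intro h k hk
        rw [hEq k hk]
        constructor
        · have := (Set.mem_iInter.1 (Set.mem_iInter.1 (h (a k) (haT k hk)) k) hk).1
          rwa [if_pos rfl, Set.mem_preimage] at this
        · have := (Set.mem_iInter.1 (Set.mem_iInter.1 (h (b k) (hbT k hk)) k) hk).2
          rwa [if_pos rfl, Set.mem_preimage] at this
      · intro h i _
        simp only [hg, Set.mem_iInter, Set.mem_inter_iff]
        intro k hk
        have hfk := h k hk
        rw [hEq k hk] at hfk
        constructor
        · split_ifs with h1
          · subst h1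
            exact hfk.1
          · trivial
        · split_ifs with h1
          · subst h1
            exact hfk.2
          · trivial
    -- F4 disjointness
    have hdisj : (↑S : Set κ).PairwiseDisjoint (fun k => ({a k, b k} : Finset ι)) := by
      intro k _ l _ hkl
      simp only [Function.onFun, Finset.disjoint_left, Finset.mem_insert, Finset.mem_singleton]
      rintro i (rfl | rfl) hmem
      · rcases hmem with h | h
        · exact (hd k l hkl).1 h
        · exact (hd k l hkl).2.1 h
      · rcases hmem with h | h
        · exact (hd k l hkl).2.2.1 h
        · exact (hd k l hkl).2.2.2 h
    -- conclude
    calc P (⋂ k ∈ S, f k) = P (⋂ i ∈ T, g i) := by rw [hInter]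
      _ = ∏ i ∈ T, P (g i) := hZi.meas_biInter hgmeas
      _ = ∏ k ∈ S, ∏ i ∈ ({a k, b k} : Finset ι), P (g i) := Finset.prod_biUnion hdisj
      _ = ∏ k ∈ S, P (f k) := by
          refine Finset.prod_congr rfl fun k hk => ?_
          rw [Finset.prod_pair (hab k), hga k hk, hgb k hk, hEq k hk]
          exact ((hZi.indepFun (hab k)).measure_inter_preimage_eq_mul _ _
            (hAm k) (hBm k)).symm

lemma aux_integrable_exp {Ω : Type*} [MeasurableSpace Ω] (P : Measure Ω) [IsProbabilityMeasure P]
    {V : Ω → ℝ} (hV : Measurable V) (hV0 : ∀ ω, 0 ≤ V ω) {c : ℝ} (hc : c ≤ 0) :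
    Integrable (fun ω => Real.exp (c * V ω)) P := by
  refine (integrable_const (1:ℝ)).mono' ((hV.const_mul c).exp.aestronglyMeasurable)
    (ae_of_all _ fun ω => ?_)
  rw [Real.norm_eq_abs, abs_of_pos (Real.exp_pos _)]
  exact Real.exp_le_one_iff.2 (mul_nonpos_of_nonpos_of_nonneg hc (hV0 ω))

lemma aux_kappa_bound {Y : Type*} [MeasurableSpace Y] (ν : Measure Y) [IsProbabilityMeasure ν]
    {f : Y → ℝ} (hf : Measurable f) {B s : ℝ} (hs : 0 ≤ s) (hB : 0 ≤ B)
    (hf0 : ∀ q, 0 ≤ f q) (hfB : ∀ q, f q ≤ B) :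
    ∫ q, Real.exp (-(s * f q)) ∂ν
      ≤ Real.exp (-(s * (∫ q, f q ∂ν)) + s^2 * B * (∫ q, f q ∂ν) / 2) := by
  have hfint : Integrable f ν := by
    refine (integrable_const B).mono' hf.aestronglyMeasurable (ae_of_all _ fun q => ?_)
    rw [Real.norm_eq_abs, abs_of_nonneg (hf0 q)]
    exact hfB q
  have hpoint : ∀ q, Real.exp (-(s * f q)) ≤ 1 - s * f q + s^2 * B * f q / 2 := by
    intro q
    have h1 := aux_exp_bound (mul_nonneg hs (hf0 q))
    have h2 : (s * f q)^2 / 2 ≤ s^2 * B * f q / 2 := by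
      nlinarith [mul_nonneg (mul_nonneg (sq_nonneg s) (hf0 q)) (sub_nonneg.2 (hfB q))]
    linarith
  have hrw : ∀ q, 1 - s * f q + s^2 * B * f q / 2 = 1 + (s^2 * B / 2 - s) * f q := by
    intro q; ring
  have hint2 : Integrable (fun q => 1 + (s^2 * B / 2 - s) * f q) ν :=
    (integrable_const 1).add (hfint.const_mul _)
  have hintexp : Integrable (fun q => Real.exp (-(s * f q))) ν := by
    have := aux_integrable_exp ν hf hf0 (c := -s) (neg_nonpos.2 hs)
    simpa [neg_mul] using this
  calc ∫ q, Real.exp (-(s * f q)) ∂ν ≤ ∫ q, (1 + (s^2 * B / 2 - s) * f q) ∂ν := by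
        refine integral_mono hintexp hint2 fun q => ?_
        rw [← hrw q]
        exact hpoint q
    _ = 1 + (s^2 * B / 2 - s) * (∫ q, f q ∂ν) := by
        rw [integral_add (integrable_const 1) (hfint.const_mul _), integral_const,
          integral_const_mul]
        simp [measure_univ]
    _ ≤ Real.exp (-(s * (∫ q, f q ∂ν)) + s^2 * B * (∫ q, f q ∂ν) / 2) := by
        have := Real.add_one_le_exp (-(s * (∫ q, f q ∂ν)) + s^2 * B * (∫ q, f q ∂ν) / 2)
        nlinarith [this]

lemma aux_numeric (n : ℕ) (hn : 4 ≤ n) (L C s lam B : ℝ) (hlog : 0 < L)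
    (hn0 : (0:ℝ) < n) (hC0 : 0 ≤ C) (hC12 : 12 < C)
    (hrge2 : 3 * (n:ℝ) ≤ 8 * ((n/2 : ℕ):ℝ))
    (hlamdef : lam = ((n/2:ℕ):ℝ) * s)
    (hsB : s * B = 3/4)
    (hs_eq : s = 3 * L / (4 * (n:ℝ))) :
    lam * (C^2/4) + ((n/2:ℕ):ℝ) * (-(s * C^2) + s^2 * B * C^2 / 2) ≤ -(2*L) := by
  have hC2 : (144:ℝ) ≤ C^2 := by nlinarith
  have hexp_eq : lam * (C^2/4) + ((n/2:ℕ):ℝ) * (-(s * C^2) + s^2 * B * C^2 / 2)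
      = -((3/8) * ((n/2:ℕ):ℝ) * s * C^2) := by
    have h : s^2 * B = s * (3/4) := by rw [pow_two, mul_assoc, hsB]
    rw [hlamdef]
    linear_combination (((n/2:ℕ):ℝ) * C^2 / 2) * h
  rw [hexp_eq]
  have hstep : 2 * L ≤ (3/8) * ((n/2:ℕ):ℝ) * s * C^2 := by
    rw [hs_eq]
    rw [show (3:ℝ)/8 * ((n/2:ℕ):ℝ) * (3 * L / (4 * (n:ℝ))) * C^2
        = ((9/32) * (((n/2:ℕ):ℝ) * L) * C^2) / n from by ring]
    rw [le_div_iff₀ hn0]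
    have h1 : (9/32) * (((n/2:ℕ):ℝ) * L) * 144 ≤ (9/32) * (((n/2:ℕ):ℝ) * L) * C^2 :=
      mul_le_mul_of_nonneg_left hC2 (by positivity)
    have h2 : 2 * L * n ≤ (9/32) * (((n/2:ℕ):ℝ) * L) * 144 := by
      nlinarith [mul_nonneg (by linarith [hrge2] : (0:ℝ) ≤ (81/2) * ((n/2:ℕ):ℝ) - 2*(n:ℝ))
        hlog.le]
    linarith
  linarith

end AuxLemmas

/-- **Lemma (comparison of `Ĉ` and `C`, inequality (15)).**
Under Assumption 4 (`m ≥ 2`, `n ≥ 4`), where `X_1, …, X_n` are the predictor parts of the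
i.i.d. sample `Z_i = (X_i, Y_i)`, `C² = max_k E ψ_k²(X, X')` and
`Ĉ² = max_k (1/(n(n−1))) ∑_{i ≠ j} ψ_k²(X_i, X_j)`, the inequality
`(1/2)·max(C,6) > max(Ĉ,6)` holds with probability at most `1/m²`. -/
theorem chat_lower_comparison
    {Ω : Type*} [MeasurableSpace Ω] {P : Measure Ω} [IsProbabilityMeasure P]
    (d : ℕ) (𝒳 : Set (Fin d → ℝ)) (𝒴 : Set ℝ)
    (μ : Measure (𝒳 × 𝒴)) [IsProbabilityMeasure μ]
    (n : ℕ) (hn : 4 ≤ n)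
    (Z : Fin n → Ω → 𝒳 × 𝒴) (hZmeas : ∀ i, Measurable (Z i))
    (hZid : ∀ i, Measure.map (Z i) P = μ)
    (hZindep : iIndepFun Z P)
    (m : ℕ) (hm : 2 ≤ m)
    (ψ : Fin m → 𝒳 × 𝒳 → ℝ) (hψmeas : ∀ k, Measurable (ψ k))
    -- Assumption 4: `max_k |ψ_k|_∞ ≤ √(n / log m)` and `C² = max_k E ψ_k²(X, X')`
    (hψbound : ∀ k p, |ψ k p| ≤ Real.sqrt ((n : ℝ) / Real.log m))
    (C : ℝ) (hC0 : 0 ≤ C)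
    (hC : C ^ 2 = ⨆ k : Fin m,
      ∫ q, (ψ k q) ^ 2 ∂((μ.map Prod.fst).prod (μ.map Prod.fst)))
    -- the empirical counterpart `Ĉ` of `C`
    (Chat : Ω → ℝ) (hChat0 : ∀ ω, 0 ≤ Chat ω)
    (hChat : ∀ ω, (Chat ω) ^ 2 = ⨆ k : Fin m,
      (1 / ((n : ℝ) * ((n : ℝ) - 1))) *
        ∑ i : Fin n, ∑ j : Fin n,
          (if i ≠ j then (ψ k ((Z i ω).1, (Z j ω).1)) ^ 2 else 0)) :
    (P {ω | max (Chat ω) 6 < (1 / 2) * max C 6}).toReal ≤ 1 / (m : ℝ) ^ 2 := by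
  classical
  have hm1 : (1:ℝ) < (m:ℝ) := by exact_mod_cast hm
  have hm0 : (0:ℝ) < (m:ℝ) := by linarith
  by_cases hC12 : C ≤ 12
  · -- the event is empty
    have hempty : {ω | max (Chat ω) 6 < (1 / 2) * max C 6} = ∅ := by
      ext ω
      simp only [Set.mem_setOf_eq, Set.mem_empty_iff_false, iff_false, not_lt]
      have h1 : max C 6 ≤ 12 := max_le hC12 (by norm_num)
      have h2 := le_max_right (Chat ω) 6
      linarith
    rw [hempty, measure_empty, ENNReal.toReal_zero]
    positivity
  push_neg at hC12
  -- basic positivity facts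
  have hlog : 0 < Real.log m := Real.log_pos hm1
  have hn0 : (0:ℝ) < (n:ℝ) := by exact_mod_cast (by omega : 0 < n)
  have hn4 : (4:ℝ) ≤ (n:ℝ) := by exact_mod_cast hn
  set L : ℝ := Real.log m with hLdef
  set B : ℝ := (n:ℝ) / L with hBdef
  have hB : 0 < B := div_pos hn0 hlog
  -- choose the maximizing index K
  set μ₁ : Measure 𝒳 := μ.map Prod.fst with hμ₁def
  haveI hμ₁prob : IsProbabilityMeasure μ₁ := Measure.isProbabilityMeasure_map measurable_fst.aemeasurable
  set ν : Measure (𝒳 × 𝒳) := μ₁.prod μ₁ with hνdef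
  haveI hνprob : IsProbabilityMeasure ν := by rw [hνdef]; infer_instance
  haveI : Nonempty (Fin m) := ⟨⟨0, by omega⟩⟩
  obtain ⟨K, hKmax⟩ := Finite.exists_max (fun k : Fin m => ∫ q, (ψ k q)^2 ∂ν)
  have hKC : ∫ q, (ψ K q)^2 ∂ν = C^2 := by
    rw [hC]
    exact le_antisymm (le_ciSup (f := fun k : Fin m => ∫ q, (ψ k q)^2 ∂ν) (Set.Finite.bddAbove (Set.finite_range _)) K) (ciSup_le hKmax)
  set f : 𝒳 × 𝒳 → ℝ := fun q => (ψ K q)^2 with hfdef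
  have hfm : Measurable f := (hψmeas K).pow_const 2
  have hf0 : ∀ q, 0 ≤ f q := fun q => sq_nonneg _
  have hfB : ∀ q, f q ≤ B := by
    intro q
    have h1 := hψbound K q
    have h2 : (ψ K q)^2 ≤ (Real.sqrt B)^2 := by
      rw [← sq_abs]
      exact pow_le_pow_left₀ (abs_nonneg _) h1 2
    rwa [Real.sq_sqrt hB.le] at h2
  set X : Fin n → Ω → 𝒳 := fun i ω => (Z i ω).1 with hXdef
  have hXm : ∀ i, Measurable (X i) := fun i => measurable_fst.comp (hZmeas i)
  have hlaw : ∀ i, P.map (X i) = μ₁ := by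
    intro i
    rw [hμ₁def, ← hZid i]
    exact (Measure.map_map measurable_fst (hZmeas i)).symm
  -- r and constants
  have hr2 : 2 ≤ n / 2 := by omega
  have hrpos : (0:ℝ) < ((n/2 : ℕ):ℝ) := by exact_mod_cast (by omega : 0 < n/2)
  have hrge2 : 3 * (n:ℝ) ≤ 8 * ((n/2 : ℕ):ℝ) := by
    have : 3 * n ≤ 8 * (n/2) := by omega
    exact_mod_cast this
  set s : ℝ := 3 / (4 * B) with hsdef
  have hs : 0 < s := by positivity
  set lam : ℝ := ((n/2 : ℕ):ℝ) * s with hlamdef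
  have hlam : 0 < lam := by positivity
  -- the U-statistic
  set U : Ω → ℝ := fun ω => (1 / ((n : ℝ) * ((n : ℝ) - 1))) *
      ∑ i : Fin n, ∑ j : Fin n,
        (if i ≠ j then (ψ K ((Z i ω).1, (Z j ω).1)) ^ 2 else 0) with hUdef
  have hUm : Measurable U := by
    apply Measurable.const_mul
    apply Finset.measurable_sum
    intro i _
    apply Finset.measurable_sum
    intro j _
    rcases eq_or_ne i j with rfl | hne
    · simp
    · simp only [hne, ne_eq, not_false_eq_true, if_true]
      exact ((hψmeas K).comp
        ((measurable_fst.comp (hZmeas i)).prodMk (measurable_fst.comp (hZmeas j)))).pow_const 2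
  have hU0 : ∀ ω, 0 ≤ U ω := by
    intro ω
    apply mul_nonneg
    · rw [one_div]
      apply inv_nonneg.2
      nlinarith
    · apply Finset.sum_nonneg
      intro i _
      apply Finset.sum_nonneg
      intro j _
      split_ifs
      · exact sq_nonneg _
      · exact le_refl 0
  -- event inclusion
  have hsub : {ω | max (Chat ω) 6 < (1 / 2) * max C 6} ⊆ {ω | U ω ≤ C ^ 2 / 4} := by
    intro ω hω
    simp only [Set.mem_setOf_eq] at hω ⊢
    have hCmax : max C 6 = C := max_eq_left (by linarith)
    rw [hCmax] at hω
    have h1 : Chat ω < C / 2 := by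
      have := le_max_left (Chat ω) 6
      linarith
    have h2 : (Chat ω) ^ 2 < C ^ 2 / 4 := by nlinarith [hChat0 ω]
    have h3 : U ω ≤ (Chat ω) ^ 2 := by
      rw [hChat ω]
      exact le_ciSup (f := fun k : Fin m => (1 / ((n : ℝ) * ((n : ℝ) - 1))) *
        ∑ i : Fin n, ∑ j : Fin n,
          (if i ≠ j then (ψ k ((Z i ω).1, (Z j ω).1)) ^ 2 else 0))
        (Set.Finite.bddAbove (Set.finite_range _)) K
    linarith
  -- the per-permutation average functions
  set V : Equiv.Perm (Fin n) → Ω → ℝ := fun π ω =>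
    (((n / 2 : ℕ) : ℝ))⁻¹ * ∑ i : Fin (n / 2),
      (ψ K ((Z (π (pA i)) ω).1, (Z (π (pB i)) ω).1)) ^ 2 with hVdef
  have hVm : ∀ π, Measurable (V π) := by
    intro π
    apply Measurable.const_mul
    apply Finset.measurable_sum
    intro i _
    exact ((hψmeas K).comp ((measurable_fst.comp (hZmeas _)).prodMk
      (measurable_fst.comp (hZmeas _)))).pow_const 2
  have hV0 : ∀ π ω, 0 ≤ V π ω := by
    intro π ω
    apply mul_nonneg (inv_nonneg.2 hrpos.le)
    exact Finset.sum_nonneg fun i _ => sq_nonneg _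
  -- pointwise identity : U is the average over permutations of V
  have hUperm : ∀ ω, U ω = ((n.factorial : ℝ))⁻¹ * ∑ π : Equiv.Perm (Fin n), V π ω := by
    intro ω
    exact aux_perm_avg hn (fun a b => (ψ K ((Z a ω).1, (Z b ω).1)) ^ 2)
  -- per-permutation Chernoff factor bound
  have hperm : ∀ π : Equiv.Perm (Fin n),
      ∫ ω, Real.exp (-lam * V π ω) ∂P
        ≤ Real.exp (((n/2 : ℕ):ℝ) * (-(s * C^2) + s^2 * B * C^2 / 2)) := by
    intro π
    set a : Fin (n/2) → Fin n := fun i => π (pA i) with hadef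
    set b : Fin (n/2) → Fin n := fun i => π (pB i) with hbdef
    have hab : ∀ i, a i ≠ b i := fun i h => pA_ne_pB i i (π.injective h)
    have hd : ∀ k l, k ≠ l → a k ≠ a l ∧ a k ≠ b l ∧ b k ≠ a l ∧ b k ≠ b l := by
      intro k l hkl
      exact ⟨fun h => hkl (pA_inj (π.injective h)),
             fun h => pA_ne_pB k l (π.injective h),
             fun h => pA_ne_pB l k (π.injective h).symm,
             fun h => hkl (pB_inj (π.injective h))⟩
    have hpairindep := aux_iIndepFun_pair hZmeas hZindep a b hab hd
    set g2 : ((𝒳 × 𝒴) × (𝒳 × 𝒴)) → ℝ := fun q => (ψ K (q.1.1, q.2.1))^2 with hg2def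
    have hg2m : Measurable g2 :=
      ((hψmeas K).comp ((measurable_fst.comp measurable_fst).prodMk
        (measurable_fst.comp measurable_snd))).pow_const 2
    set W : Fin (n/2) → Ω → ℝ := fun i ω => g2 (Z (a i) ω, Z (b i) ω) with hWdef
    have hWindep : iIndepFun W P :=
      hpairindep.comp (fun _ => g2) (fun _ => hg2m)
    have hWm : ∀ i, Measurable (W i) :=
      fun i => hg2m.comp ((hZmeas (a i)).prodMk (hZmeas (b i)))
    have hVsum : ∀ ω, -lam * V π ω = (-s) * (∑ i, W i) ω := by
      intro ω
      simp only [hVdef, hWdef, hlamdef, hg2def, hadef, hbdef, Finset.sum_apply]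
      field_simp
    have hmgf : ∫ ω, Real.exp (-lam * V π ω) ∂P = mgf (∑ i, W i) P (-s) := by
      have h0 : mgf (∑ i, W i) P (-s) = ∫ ω, Real.exp ((-s) * (∑ i, W i) ω) ∂P := rfl
      rw [h0]
      exact integral_congr_ae (Filter.Eventually.of_forall fun ω => congrArg Real.exp (hVsum ω))
    rw [hmgf, iIndepFun.mgf_sum hWindep hWm]
    have hfac : ∀ i : Fin (n/2), mgf (W i) P (-s) = ∫ q, Real.exp (-(s * f q)) ∂ν := by
      intro i
      have hind : IndepFun (X (a i)) (X (b i)) P :=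
        (hZindep.indepFun (hab i)).comp measurable_fst measurable_fst
      have hmap : P.map (fun ω => (X (a i) ω, X (b i) ω)) = ν := by
        rw [(indepFun_iff_map_prod_eq_prod_map_map ((hXm (a i)).aemeasurable)
          ((hXm (b i)).aemeasurable)).1 hind, hlaw, hlaw, hνdef]
      have h1 : mgf (W i) P (-s)
          = ∫ ω, (fun q : 𝒳 × 𝒳 => Real.exp (-(s * f q)))
              ((fun ω => (X (a i) ω, X (b i) ω)) ω) ∂P := by
        refine integral_congr_ae (Filter.Eventually.of_forall fun ω => ?_)
        simp only [hWdef, hg2def, hfdef, hXdef, neg_mul]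
      rw [h1, ← hmap]
      exact (integral_map ((hXm (a i)).prodMk (hXm (b i))).aemeasurable
        ((hfm.const_mul s).neg.exp.aestronglyMeasurable)).symm
    have hκ : ∫ q, Real.exp (-(s * f q)) ∂ν ≤ Real.exp (-(s * C^2) + s^2 * B * C^2 / 2) := by
      have h := aux_kappa_bound ν hfm hs.le hB.le hf0 hfB
      rwa [hKC] at h
    calc ∏ i : Fin (n/2), mgf (W i) P (-s)
        = (∫ q, Real.exp (-(s * f q)) ∂ν) ^ (n/2 : ℕ) := by
          simp_rw [hfac]
          rw [Finset.prod_const, Finset.card_univ, Fintype.card_fin]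
      _ ≤ (Real.exp (-(s * C^2) + s^2 * B * C^2 / 2)) ^ (n/2 : ℕ) :=
          pow_le_pow_left₀ (integral_nonneg fun q => (Real.exp_pos _).le) hκ _
      _ = Real.exp (((n/2 : ℕ):ℝ) * (-(s * C^2) + s^2 * B * C^2 / 2)) := by
          rw [← Real.exp_nat_mul]
  -- integrability
  have hintU : Integrable (fun ω => Real.exp (-lam * U ω)) P :=
    aux_integrable_exp P hUm hU0 (neg_nonpos.2 hlam.le)
  have hintV : ∀ π : Equiv.Perm (Fin n), Integrable (fun ω => Real.exp (-lam * V π ω)) P :=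
    fun π => aux_integrable_exp P (hVm π) (hV0 π) (neg_nonpos.2 hlam.le)
  have hfacpos : (0:ℝ) < (n.factorial : ℝ) := by exact_mod_cast n.factorial_pos
  have hw : ∑ _π : Equiv.Perm (Fin n), ((n.factorial:ℝ))⁻¹ = 1 := by
    rw [Finset.sum_const, Finset.card_univ, Fintype.card_perm, Fintype.card_fin, nsmul_eq_mul,
      mul_inv_cancel₀ hfacpos.ne']
  -- Jensen's inequality for exp over the permutation average
  have hjensen : ∀ ω, Real.exp (-lam * U ω)
      ≤ ∑ π : Equiv.Perm (Fin n), ((n.factorial:ℝ))⁻¹ * Real.exp (-lam * V π ω) := by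
    intro ω
    have harg : ∑ π : Equiv.Perm (Fin n), ((n.factorial:ℝ))⁻¹ • (-lam * V π ω) = -lam * U ω := by
      rw [hUperm ω]
      simp only [smul_eq_mul]
      rw [← Finset.mul_sum, ← Finset.mul_sum]
      ring
    have hj := convexOn_exp.map_sum_le (t := Finset.univ)
      (w := fun _ : Equiv.Perm (Fin n) => ((n.factorial:ℝ))⁻¹)
      (p := fun π => -lam * V π ω)
      (fun _ _ => inv_nonneg.2 (Nat.cast_nonneg _)) hw (fun _ _ => Set.mem_univ _)
    rw [harg] at hj
    simpa [smul_eq_mul] using hj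
  -- bound on the mgf of U
  have hmgfU : mgf U P (-lam) ≤ Real.exp (((n/2:ℕ):ℝ) * (-(s * C^2) + s^2 * B * C^2 / 2)) := by
    have h0 : mgf U P (-lam) = ∫ ω, Real.exp (-lam * U ω) ∂P := rfl
    rw [h0]
    calc ∫ ω, Real.exp (-lam * U ω) ∂P
        ≤ ∫ ω, (∑ π : Equiv.Perm (Fin n), ((n.factorial:ℝ))⁻¹ * Real.exp (-lam * V π ω)) ∂P := by
          refine integral_mono hintU ?_ hjensen
          exact integrable_finset_sum _ (fun π _ => (hintV π).const_mul _)
      _ = ∑ π : Equiv.Perm (Fin n), ((n.factorial:ℝ))⁻¹ * ∫ ω, Real.exp (-lam * V π ω) ∂P := by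
          rw [integral_finset_sum _ (fun π _ => (hintV π).const_mul _)]
          exact Finset.sum_congr rfl fun π _ => integral_const_mul _ _
      _ ≤ ∑ _π : Equiv.Perm (Fin n), ((n.factorial:ℝ))⁻¹
            * Real.exp (((n/2:ℕ):ℝ) * (-(s * C^2) + s^2 * B * C^2 / 2)) := by
          refine Finset.sum_le_sum fun π _ => ?_
          exact mul_le_mul_of_nonneg_left (hperm π) (inv_nonneg.2 (Nat.cast_nonneg _))
      _ = Real.exp (((n/2:ℕ):ℝ) * (-(s * C^2) + s^2 * B * C^2 / 2)) := by
          rw [← Finset.sum_mul, hw, one_mul]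
  -- Chernoff bound
  have hcher := measure_le_le_exp_mul_mgf (μ := P) (X := U) (C^2/4) (neg_nonpos.2 hlam.le) hintU
  -- numeric bound for the exponent
  have hsB : s * B = 3/4 := by rw [hsdef]; field_simp
  have hs_eq : s = 3 * L / (4 * (n:ℝ)) := by
    rw [hsdef, hBdef]
    field_simp
  have hnum := aux_numeric n hn L C s lam B hlog hn0 hC0 hC12 hrge2 hlamdef hsB hs_eq
  -- final chain
  calc (P {ω | max (Chat ω) 6 < 1 / 2 * max C 6}).toReal
      ≤ (P {ω | U ω ≤ C^2/4}).toReal :=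
        ENNReal.toReal_mono (measure_ne_top _ _) (measure_mono hsub)
    _ ≤ Real.exp (-(-lam) * (C^2/4)) * mgf U P (-lam) := hcher
    _ ≤ Real.exp (lam * (C^2/4))
          * Real.exp (((n/2:ℕ):ℝ) * (-(s * C^2) + s^2 * B * C^2 / 2)) := by
        rw [neg_neg]
        exact mul_le_mul_of_nonneg_left hmgfU (Real.exp_pos _).le
    _ = Real.exp (lam * (C^2/4) + ((n/2:ℕ):ℝ) * (-(s * C^2) + s^2 * B * C^2 / 2)) :=
        (Real.exp_add _ _).symm
    _ ≤ Real.exp (-(2*L)) := Real.exp_le_exp.2 hnum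
    _ = 1 / (m:ℝ)^2 := by
        rw [show -(2*L) = -(L + L) from by ring, Real.exp_neg, Real.exp_add, hLdef,
          Real.exp_log hm0, one_div, sq]

end
end

section
/- Suppose Assumption 4 holds (m ≥ 2, n ≥ 4). Then P( 2·max(C, 6) < max(Ĉ, 6) ) ≤ 1/m². -/
open MeasureTheory ProbabilityTheory Finset

private lemma exists_perm_pair {α : Type*} [DecidableEq α] {p q i j : α}
    (hpq : p ≠ q) (hij : i ≠ j) : ∃ τ : Equiv.Perm α, τ p = i ∧ τ q = j := by
  refine ⟨(Equiv.swap ((Equiv.swap p i) q) j) * (Equiv.swap p i), ?_, ?_⟩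
  · simp only [Equiv.Perm.mul_apply, Equiv.swap_apply_left]
    refine Equiv.swap_apply_of_ne_of_ne ?_ hij
    intro h
    exact hpq ((Equiv.swap p i).injective (by rw [Equiv.swap_apply_left, ← h]))
  · simp only [Equiv.Perm.mul_apply, Equiv.swap_apply_left]

private lemma sum_perm_pair_eq {n : ℕ} {p q : Fin n} (hpq : p ≠ q) (F : Fin n → Fin n → ℝ) :
    ((n : ℝ) * ((n : ℝ) - 1)) * ∑ σ : Equiv.Perm (Fin n), F (σ p) (σ q)
      = (n.factorial : ℝ) * ∑ x ∈ univ.offDiag, F x.1 x.2 := by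
  classical
  have hn2 : 2 ≤ n := by
    rcases Nat.lt_or_ge n 2 with h | h
    · interval_cases n <;> [exact absurd (Subsingleton.elim p q) hpq;
        exact absurd (Subsingleton.elim p q) hpq]
    · exact h
  set g : Equiv.Perm (Fin n) → Fin n × Fin n := fun σ => (σ p, σ q) with hg
  have himg : (univ : Finset (Equiv.Perm (Fin n))).image g = univ.offDiag := by
    ext x
    simp only [mem_image, mem_univ, true_and, mem_offDiag]
    constructor
    · rintro ⟨σ, rfl⟩
      exact fun h => hpq (σ.injective h)
    · rintro hx
      obtain ⟨τ, h1, h2⟩ := exists_perm_pair hpq hx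
      exact ⟨τ, by simp [hg, h1, h2]⟩
  have hfib : ∀ x ∈ univ.offDiag, ∀ y ∈ univ.offDiag,
      (univ.filter fun σ => g σ = x).card = (univ.filter fun σ => g σ = y).card := by
    rintro ⟨i, j⟩ hx ⟨i', j'⟩ hy
    rw [mem_offDiag] at hx hy
    obtain ⟨τ, hτ1, hτ2⟩ := exists_perm_pair hx.2.2 hy.2.2
    dsimp only at hτ1 hτ2
    refine Finset.card_bij' (fun σ _ => τ * σ) (fun σ _ => τ⁻¹ * σ) ?_ ?_ ?_ ?_
    · intro σ hσ
      simp only [mem_filter, mem_univ, true_and, hg, Prod.mk.injEq] at hσ ⊢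
      simp [Equiv.Perm.mul_apply, hσ.1, hσ.2, hτ1, hτ2]
    · intro σ hσ
      simp only [mem_filter, mem_univ, true_and, hg, Prod.mk.injEq] at hσ ⊢
      constructor
      · rw [Equiv.Perm.mul_apply, hσ.1, ← hτ1]; simp
      · rw [Equiv.Perm.mul_apply, hσ.2, ← hτ2]; simp
    · intro σ _; simp [mul_assoc]
    · intro σ _; simp [← mul_assoc]
  have hsum : ∀ (f : Fin n × Fin n → ℝ), ∑ σ : Equiv.Perm (Fin n), f (g σ)
      = ∑ x ∈ univ.offDiag, ((univ.filter fun σ => g σ = x).card : ℝ) * f x := by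
    intro f
    rw [Finset.sum_comp f g, himg]
    simp [nsmul_eq_mul]
  have hfact : (n.factorial : ℝ)
      = ∑ x ∈ univ.offDiag, ((univ.filter fun σ => g σ = x).card : ℝ) := by
    have h1 := hsum (fun _ => (1 : ℝ))
    simp only [mul_one, Finset.sum_const, Finset.card_univ, nsmul_eq_mul] at h1
    rw [← h1]
    simp [Fintype.card_perm]
  have hcardoff : ((univ : Finset (Fin n)).offDiag.card : ℝ) = (n : ℝ) * ((n : ℝ) - 1) := by
    rw [Finset.offDiag_card]
    simp only [Finset.card_univ, Fintype.card_fin]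
    have : n ≤ n * n := Nat.le_mul_of_pos_left n (by omega)
    push_cast [Nat.cast_sub this]
    ring
  have hpqmem : (p, q) ∈ (univ : Finset (Fin n)).offDiag := by
    simp [mem_offDiag, hpq]
  set c : ℝ := ((univ.filter fun σ => g σ = (p, q)).card : ℝ) with hc
  have hconst : ∀ x ∈ (univ : Finset (Fin n)).offDiag,
      ((univ.filter fun σ => g σ = x).card : ℝ) = c := by
    intro x hx
    exact_mod_cast congrArg _ (hfib x hx (p, q) hpqmem)
  have hfact' : (n.factorial : ℝ) = ((n : ℝ) * ((n : ℝ) - 1)) * c := by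
    rw [hfact, Finset.sum_congr rfl hconst, Finset.sum_const, nsmul_eq_mul, hcardoff]
  rw [hsum (fun x => F x.1 x.2), Finset.sum_congr rfl
    (fun x hx => by rw [hconst x hx]), ← Finset.mul_sum, hfact']
  ring

private lemma sum_ite_offDiag {n : ℕ} (F : Fin n → Fin n → ℝ) :
    ∑ i : Fin n, ∑ j : Fin n, (if i ≠ j then F i j else 0)
      = ∑ x ∈ univ.offDiag, F x.1 x.2 := by
  classical
  rw [← Finset.sum_product']
  have : (univ : Finset (Fin n)).offDiag
      = (univ ×ˢ univ).filter (fun x => x.1 ≠ x.2) := by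
    ext x; simp [mem_offDiag]
  rw [this, Finset.sum_filter]

private lemma integrable_of_bounded {Ω : Type*} [MeasurableSpace Ω] {P : Measure Ω}
    [IsFiniteMeasure P] {f : Ω → ℝ} (hm : AEStronglyMeasurable f P) (B : ℝ)
    (hB : ∀ ω, |f ω| ≤ B) : Integrable f P :=
  (integrable_const B).mono' hm (Filter.Eventually.of_forall hB)

private lemma exp_chord {u : ℝ} (h0 : 0 ≤ u) (h1 : u ≤ 1) :
    Real.exp u ≤ 1 + 2 * u := by
  have hcvx := convexOn_exp.2 (Set.mem_univ (0 : ℝ)) (Set.mem_univ (1 : ℝ))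
    (by linarith : (0:ℝ) ≤ 1 - u) h0 (by ring)
  simp only [smul_eq_mul, mul_zero, mul_one, zero_add, Real.exp_zero] at hcvx
  have he : Real.exp 1 ≤ 3 := by
    have := Real.exp_one_lt_d9; linarith
  nlinarith [hcvx]

private lemma integral_prod_pairs {Ω β : Type*} [MeasurableSpace Ω] [MeasurableSpace β]
    {P : Measure Ω} [IsProbabilityMeasure P] {n : ℕ} {Z : Fin n → Ω → β}
    (hZmeas : ∀ i, Measurable (Z i))
    (hZindep : iIndepFun Z P)
    {N : ℕ} (a b : Fin N → Fin n)
    (hd : ∀ r r', r ≠ r' → a r ≠ a r' ∧ a r ≠ b r' ∧ b r ≠ a r' ∧ b r ≠ b r')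
    (f : β × β → ℝ) (hf : Measurable f)
    (s : Finset (Fin N)) :
    ∫ ω, ∏ r ∈ s, f (Z (a r) ω, Z (b r) ω) ∂P
      = ∏ r ∈ s, ∫ ω, f (Z (a r) ω, Z (b r) ω) ∂P := by
  classical
  induction s using Finset.induction_on with
  | empty => simp
  | @insert r₀ s hr₀ ih =>
    simp_rw [Finset.prod_insert hr₀]
    rw [← ih]
    set S : Finset (Fin n) := {a r₀, b r₀} with hS
    set T : Finset (Fin n) := s.biUnion (fun r => {a r, b r}) with hT
    have hST : Disjoint S T := by
      rw [Finset.disjoint_left]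
      intro x hxS hxT
      rw [hT, Finset.mem_biUnion] at hxT
      obtain ⟨r, hrs, hxr⟩ := hxT
      have hrne : r₀ ≠ r := fun h => hr₀ (h ▸ hrs)
      obtain ⟨h1, h2, h3, h4⟩ := hd r₀ r hrne
      rw [hS] at hxS
      simp only [Finset.mem_insert, Finset.mem_singleton] at hxS hxr
      rcases hxS with rfl | rfl <;> rcases hxr with h | h <;> tauto
    have base := hZindep.indepFun_finset S T hST hZmeas
    have haS : a r₀ ∈ S := by simp [hS]
    have hbS : b r₀ ∈ S := by simp [hS]
    set φ : (∀ i : S, β) → ℝ := fun v => f (v ⟨a r₀, haS⟩, v ⟨b r₀, hbS⟩) with hφ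
    have hφm : Measurable φ :=
      hf.comp ((measurable_pi_apply _).prodMk (measurable_pi_apply _))
    set ψf : (∀ i : T, β) → ℝ := fun v =>
      ∏ r ∈ s.attach, f (v ⟨a r, by
          rw [hT, Finset.mem_biUnion]; exact ⟨r, r.2, by simp⟩⟩,
        v ⟨b r, by
          rw [hT, Finset.mem_biUnion]; exact ⟨r, r.2, by simp⟩⟩) with hψf
    have hψm : Measurable ψf := by
      apply Finset.measurable_prod
      intro r _
      exact hf.comp ((measurable_pi_apply _).prodMk (measurable_pi_apply _))
    have hind : IndepFun (fun ω => f (Z (a r₀) ω, Z (b r₀) ω))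
        (fun ω => ∏ r ∈ s, f (Z (a r) ω, Z (b r) ω)) P := by
      have h2 := base.comp hφm hψm
      have e1 : (φ ∘ fun ω (i : S) => Z i ω) = fun ω => f (Z (a r₀) ω, Z (b r₀) ω) := rfl
      have e2 : (ψf ∘ fun ω (i : T) => Z i ω)
          = fun ω => ∏ r ∈ s, f (Z (a r) ω, Z (b r) ω) := by
        funext ω
        show ∏ r ∈ s.attach, f (Z (a r) ω, Z (b r) ω) = _
        rw [Finset.prod_attach s (fun r => f (Z (a r) ω, Z (b r) ω))]
      rwa [e1, e2] at h2
    have hmeas1 : AEStronglyMeasurable (fun ω => f (Z (a r₀) ω, Z (b r₀) ω)) P :=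
      (hf.comp ((hZmeas _).prodMk (hZmeas _))).aestronglyMeasurable
    have hmeas2 : AEStronglyMeasurable (fun ω => ∏ r ∈ s, f (Z (a r) ω, Z (b r) ω)) P := by
      apply Measurable.aestronglyMeasurable
      exact Finset.measurable_prod _ (fun r _ => hf.comp ((hZmeas _).prodMk (hZmeas _)))
    exact hind.integral_fun_mul_eq_mul_integral hmeas1 hmeas2

private def eoF {n N : ℕ} (h : 2 * N ≤ n) (r : Fin N) : Fin n :=
  ⟨2 * r.1, by have := r.2; omega⟩

private def ooF {n N : ℕ} (h : 2 * N ≤ n) (r : Fin N) : Fin n :=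
  ⟨2 * r.1 + 1, by have := r.2; omega⟩

@[simp] private lemma eoF_val {n N : ℕ} (h : 2 * N ≤ n) (r : Fin N) :
    (eoF h r).1 = 2 * r.1 := rfl

@[simp] private lemma ooF_val {n N : ℕ} (h : 2 * N ≤ n) (r : Fin N) :
    (ooF h r).1 = 2 * r.1 + 1 := rfl

noncomputable section

set_option maxHeartbeats 1000000 in
/-- **Lemma (comparison of `Ĉ` and `C`, inequality (16)).**
Under Assumption 4 (`m ≥ 2`, `n ≥ 4`), where `X_1, …, X_n` are the predictor parts of the
i.i.d. sample `Z_i = (X_i, Y_i)`, `C² = max_k E ψ_k²(X, X')` and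
`Ĉ² = max_k (1/(n(n−1))) ∑_{i ≠ j} ψ_k²(X_i, X_j)`, the inequality
`2·max(C,6) < max(Ĉ,6)` holds with probability at most `1/m²`. -/
theorem chat_upper_comparison
    {Ω : Type*} [MeasurableSpace Ω] {P : Measure Ω} [IsProbabilityMeasure P]
    (d : ℕ) (𝒳 : Set (Fin d → ℝ)) (𝒴 : Set ℝ)
    (μ : Measure (𝒳 × 𝒴)) [IsProbabilityMeasure μ]
    (n : ℕ) (hn : 4 ≤ n)
    (Z : Fin n → Ω → 𝒳 × 𝒴) (hZmeas : ∀ i, Measurable (Z i))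
    (hZid : ∀ i, Measure.map (Z i) P = μ)
    (hZindep : iIndepFun Z P)
    (m : ℕ) (hm : 2 ≤ m)
    (ψ : Fin m → 𝒳 × 𝒳 → ℝ) (hψmeas : ∀ k, Measurable (ψ k))
    -- Assumption 4: `max_k |ψ_k|_∞ ≤ √(n / log m)` and `C² = max_k E ψ_k²(X, X')`
    (hψbound : ∀ k p, |ψ k p| ≤ Real.sqrt ((n : ℝ) / Real.log m))
    (C : ℝ) (hC0 : 0 ≤ C)
    (hC : C ^ 2 = ⨆ k : Fin m,
      ∫ q, (ψ k q) ^ 2 ∂((μ.map Prod.fst).prod (μ.map Prod.fst)))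
    -- the empirical counterpart `Ĉ` of `C`
    (Chat : Ω → ℝ) (hChat0 : ∀ ω, 0 ≤ Chat ω)
    (hChat : ∀ ω, (Chat ω) ^ 2 = ⨆ k : Fin m,
      (1 / ((n : ℝ) * ((n : ℝ) - 1))) *
        ∑ i : Fin n, ∑ j : Fin n,
          (if i ≠ j then (ψ k ((Z i ω).1, (Z j ω).1)) ^ 2 else 0)) :
    (P {ω | 2 * max C 6 < max (Chat ω) 6}).toReal ≤ 1 / (m : ℝ) ^ 2 := by
  classical
  haveI : Nonempty (Fin m) := ⟨⟨0, by omega⟩⟩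
  -- basic positivity facts
  have hm1 : (1 : ℝ) < m := by exact_mod_cast hm
  have hmpos : (0 : ℝ) < m := by linarith
  have hlogm : 0 < Real.log m := Real.log_pos hm1
  have hn4 : (4 : ℝ) ≤ n := by exact_mod_cast hn
  have hnpos : (0 : ℝ) < n := by linarith
  set b : ℝ := (n : ℝ) / Real.log m with hbdef
  have hb : 0 < b := div_pos hnpos hlogm
  set lam : ℝ := 1 / b with hlamdef
  have hlampos : 0 < lam := by positivity
  have hlamb : lam * b = 1 := by rw [hlamdef, one_div, inv_mul_cancel₀ hb.ne']
  set N : ℕ := n / 2 with hNdef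
  have hNn : 2 * N ≤ n := by omega
  have hNn' : n ≤ 2 * N + 1 := by omega
  have hNge : (n : ℝ) / 4 ≤ (N : ℝ) := by
    have : (n : ℝ) ≤ 2 * N + 1 := by exact_mod_cast hNn'
    linarith
  set s : ℝ := (N : ℝ) * lam with hsdef
  have hs0 : 0 ≤ s := by positivity
  set a : ℝ := 4 * max (C ^ 2) 36 with hadef
  have ha144 : (144 : ℝ) ≤ a := by
    have := le_max_right (C ^ 2) 36; simp only [hadef]; linarith
  have hnn1 : (0 : ℝ) < (n : ℝ) * ((n : ℝ) - 1) := by nlinarith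
  have hfac0 : (n.factorial : ℝ) ≠ 0 := by
    exact_mod_cast n.factorial_ne_zero
  -- the bound on ψ²
  have hψsq : ∀ k q, (ψ k q) ^ 2 ≤ b := by
    intro k q
    have h1 := hψbound k q
    have h2 : |ψ k q| ^ 2 ≤ Real.sqrt b ^ 2 :=
      pow_le_pow_left₀ (abs_nonneg _) h1 2
    rwa [sq_abs, Real.sq_sqrt hb.le] at h2
  have hψsq0 : ∀ k q, 0 ≤ (ψ k q) ^ 2 := fun k q => sq_nonneg _
  -- the marginal measure
  set ν : Measure 𝒳 := μ.map Prod.fst with hνdef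
  haveI : IsProbabilityMeasure ν :=
    Measure.isProbabilityMeasure_map measurable_fst.aemeasurable
  set Ck : Fin m → ℝ := fun k => ∫ q, (ψ k q) ^ 2 ∂(ν.prod ν) with hCkdef
  have hCk0 : ∀ k, 0 ≤ Ck k := fun k => integral_nonneg (fun q => sq_nonneg _)
  have hCkle : ∀ k, Ck k ≤ max (C ^ 2) 36 := by
    intro k
    have h1 : Ck k ≤ C ^ 2 := by
      rw [hC]
      exact le_ciSup (Finite.bddAbove_range _) k
    exact h1.trans (le_max_left _ _)
  -- the U-statistics
  set U : Fin m → Ω → ℝ := fun k ω => (1 / ((n : ℝ) * ((n : ℝ) - 1))) *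
      ∑ x ∈ univ.offDiag, (ψ k ((Z x.1 ω).1, (Z x.2 ω).1)) ^ 2 with hUdef
  have hterm_meas : ∀ (k : Fin m) (i j : Fin n),
      Measurable (fun ω => (ψ k ((Z i ω).1, (Z j ω).1)) ^ 2) := by
    intro k i j
    exact ((hψmeas k).comp ((measurable_fst.comp (hZmeas i)).prodMk
      (measurable_fst.comp (hZmeas j)))).pow_const 2
  have hUmeas : ∀ k, Measurable (U k) := by
    intro k
    exact (Finset.measurable_sum _ (fun x _ => hterm_meas k x.1 x.2)).const_mul _
  have hcardoff : (((univ : Finset (Fin n)).offDiag.card : ℝ)) = (n : ℝ) * ((n : ℝ) - 1) := by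
    rw [Finset.offDiag_card]
    simp only [Finset.card_univ, Fintype.card_fin]
    have h : n ≤ n * n := Nat.le_mul_of_pos_left n (by omega)
    push_cast [Nat.cast_sub h]
    ring
  have hU0 : ∀ k ω, 0 ≤ U k ω := by
    intro k ω
    apply mul_nonneg (by positivity)
    exact Finset.sum_nonneg (fun x _ => sq_nonneg _)
  have hUb : ∀ k ω, U k ω ≤ b := by
    intro k ω
    have h1 : ∑ x ∈ (univ : Finset (Fin n)).offDiag,
        (ψ k ((Z x.1 ω).1, (Z x.2 ω).1)) ^ 2 ≤ (univ : Finset (Fin n)).offDiag.card • b :=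
      Finset.sum_le_card_nsmul _ _ _ (fun x _ => hψsq k _)
    rw [nsmul_eq_mul, hcardoff] at h1
    rw [hUdef]
    calc (1 / ((n : ℝ) * ((n : ℝ) - 1))) * ∑ x ∈ univ.offDiag,
          (ψ k ((Z x.1 ω).1, (Z x.2 ω).1)) ^ 2
        ≤ (1 / ((n : ℝ) * ((n : ℝ) - 1))) * ((n : ℝ) * ((n : ℝ) - 1) * b) := by
          apply mul_le_mul_of_nonneg_left h1 (by positivity)
      _ = b := by field_simp; exact div_self (sub_pos.2 (by linarith : (1:ℝ) < n)).ne'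
  -- Chat² is the sup of the U's
  have hChat' : ∀ ω, (Chat ω) ^ 2 = ⨆ k, U k ω := by
    intro ω
    rw [hChat ω]
    apply iSup_congr
    intro k
    rw [sum_ite_offDiag (fun i j => (ψ k ((Z i ω).1, (Z j ω).1)) ^ 2)]
  -- event inclusion
  have hsub : {ω | 2 * max C 6 < max (Chat ω) 6} ⊆ ⋃ k, {ω | a ≤ U k ω} := by
    intro ω hω
    simp only [Set.mem_setOf_eq] at hω
    have h6 : (6 : ℝ) ≤ max C 6 := le_max_right _ _
    have h12 : (12 : ℝ) ≤ 2 * max C 6 := by linarith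
    have hCgt : 2 * max C 6 < Chat ω := by
      rcases le_or_gt (Chat ω) 6 with h | h
      · rw [max_eq_right h] at hω; linarith
      · rwa [max_eq_left h.le] at hω
    have hsq : a ≤ (Chat ω) ^ 2 := by
      have h1 : (2 * max C 6) ^ 2 < (Chat ω) ^ 2 :=
        pow_lt_pow_left₀ hCgt (by linarith) (by norm_num)
      have h2 : max (C ^ 2) 36 ≤ (max C 6) ^ 2 := by
        apply max_le
        · exact pow_le_pow_left₀ hC0 (le_max_left _ _) 2
        · calc (36 : ℝ) = 6 ^ 2 := by norm_num
            _ ≤ (max C 6) ^ 2 := pow_le_pow_left₀ (by norm_num) (le_max_right _ _) 2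
      rw [hadef]
      nlinarith
    rw [hChat' ω] at hsq
    obtain ⟨k, hk⟩ := exists_eq_ciSup_of_finite (f := fun k => U k ω)
    refine Set.mem_iUnion.2 ⟨k, ?_⟩
    show a ≤ U k ω
    rw [hk]
    exact hsq
  -- per-block integral bound
  set M : Fin m → ℝ := fun k => ∫ q, Real.exp (lam * (ψ k q) ^ 2) ∂(ν.prod ν) with hMdef
  have hM0 : ∀ k, 0 ≤ M k := fun k => integral_nonneg (fun q => (Real.exp_pos _).le)
  have hMle : ∀ k, M k ≤ Real.exp (lam * a / 2) := by
    intro k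
    have hptwise : ∀ q, Real.exp (lam * (ψ k q) ^ 2) ≤ 1 + 2 * lam * (ψ k q) ^ 2 := by
      intro q
      have hu0 : 0 ≤ lam * (ψ k q) ^ 2 := by positivity
      have hu1 : lam * (ψ k q) ^ 2 ≤ 1 := by
        calc lam * (ψ k q) ^ 2 ≤ lam * b := by
              exact mul_le_mul_of_nonneg_left (hψsq k q) hlampos.le
          _ = 1 := hlamb
      have := exp_chord hu0 hu1
      linarith
    have hmeas1 : Measurable (fun q : 𝒳 × 𝒳 => Real.exp (lam * (ψ k q) ^ 2)) :=
      Real.measurable_exp.comp (((hψmeas k).pow_const 2).const_mul lam)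
    have hint1 : Integrable (fun q => Real.exp (lam * (ψ k q) ^ 2)) (ν.prod ν) := by
      apply integrable_of_bounded hmeas1.aestronglyMeasurable (Real.exp 1)
      intro q
      rw [abs_of_pos (Real.exp_pos _)]
      apply Real.exp_le_exp.2
      calc lam * (ψ k q) ^ 2 ≤ lam * b :=
            mul_le_mul_of_nonneg_left (hψsq k q) hlampos.le
        _ = 1 := hlamb
    have hintsq : Integrable (fun q => (ψ k q) ^ 2) (ν.prod ν) := by
      apply integrable_of_bounded ((hψmeas k).pow_const 2).aestronglyMeasurable b
      intro q
      rw [abs_of_nonneg (sq_nonneg _)]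
      exact hψsq k q
    have hint2 : Integrable (fun q => 1 + 2 * lam * (ψ k q) ^ 2) (ν.prod ν) :=
      (integrable_const 1).add (hintsq.const_mul _)
    have h1 : M k ≤ ∫ q, (1 + 2 * lam * (ψ k q) ^ 2) ∂(ν.prod ν) :=
      integral_mono hint1 hint2 hptwise
    have h2 : ∫ q, (1 + 2 * lam * (ψ k q) ^ 2) ∂(ν.prod ν) = 1 + 2 * lam * Ck k := by
      rw [integral_add (integrable_const 1) (hintsq.const_mul _), integral_const,
        probReal_univ, smul_eq_mul, mul_one, integral_const_mul]
    have h3 : 2 * lam * Ck k ≤ lam * a / 2 := by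
      have h4 : Ck k ≤ a / 4 := by rw [hadef]; linarith [hCkle k]
      have h5 := mul_le_mul_of_nonneg_left h4 (by positivity : (0:ℝ) ≤ 2 * lam)
      linarith
    have h5 := Real.add_one_le_exp (lam * a / 2)
    linarith
  -- the Chernoff bound for each k
  have hkey : ∀ k, (P {ω | a ≤ U k ω}).toReal ≤ 1 / (m : ℝ) ^ 3 := by
    intro k
    -- integrability of exp (s * U k)
    have hint : Integrable (fun ω => Real.exp (s * U k ω)) P := by
      apply integrable_of_bounded
        ((hUmeas k).const_mul s).exp.aestronglyMeasurable
        (Real.exp (s * b))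
      intro ω
      rw [abs_of_pos (Real.exp_pos _)]
      exact Real.exp_le_exp.2 (mul_le_mul_of_nonneg_left (hUb k ω) hs0)
    have hcher := measure_ge_le_exp_mul_mgf (X := U k) (μ := P) (t := s) a hs0 hint
    -- the permutation decomposition
    set W : Equiv.Perm (Fin n) → Ω → ℝ := fun σ ω =>
      ∑ r : Fin N, (ψ k ((Z (σ (eoF hNn r)) ω).1, (Z (σ (ooF hNn r)) ω).1)) ^ 2 with hWdef
    have hWmeas : ∀ σ, Measurable (W σ) := by
      intro σ
      exact Finset.measurable_sum _ (fun r _ => hterm_meas k _ _)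
    have hWb : ∀ σ ω, W σ ω ≤ (N : ℝ) * b := by
      intro σ ω
      calc W σ ω ≤ (univ : Finset (Fin N)).card • b :=
            Finset.sum_le_card_nsmul _ _ _ (fun r _ => hψsq k _)
        _ = (N : ℝ) * b := by rw [nsmul_eq_mul, Finset.card_univ, Fintype.card_fin]
    have hW0 : ∀ σ ω, 0 ≤ W σ ω := fun σ ω => Finset.sum_nonneg (fun r _ => sq_nonneg _)
    have heoo : ∀ r : Fin N, eoF (n := n) hNn r ≠ ooF hNn r := by
      intro r
      simp only [ne_eq, Fin.ext_iff, eoF_val, ooF_val]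
      omega
    -- the key identity
    have hWkey : ∀ ω, s * U k ω
        = ∑ σ : Equiv.Perm (Fin n), (1 / (n.factorial : ℝ)) * (lam * W σ ω) := by
      intro ω
      have hswap : ∑ σ : Equiv.Perm (Fin n), W σ ω = ∑ r : Fin N, ∑ σ : Equiv.Perm (Fin n),
          (ψ k ((Z (σ (eoF hNn r)) ω).1, (Z (σ (ooF hNn r)) ω).1)) ^ 2 := Finset.sum_comm
      set S : ℝ := ∑ x ∈ univ.offDiag, (ψ k ((Z x.1 ω).1, (Z x.2 ω).1)) ^ 2 with hSdef
      have hinner : ∀ r : Fin N, ∑ σ : Equiv.Perm (Fin n),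
          (ψ k ((Z (σ (eoF hNn r)) ω).1, (Z (σ (ooF hNn r)) ω).1)) ^ 2
          = (n.factorial : ℝ) * S / ((n : ℝ) * ((n : ℝ) - 1)) := by
        intro r
        have h := sum_perm_pair_eq (heoo r)
          (fun i j => (ψ k ((Z i ω).1, (Z j ω).1)) ^ 2)
        rw [← hSdef] at h
        rw [eq_div_iff hnn1.ne', mul_comm _ ((n : ℝ) * ((n : ℝ) - 1))]
        exact h
      have hsumW : ∑ σ : Equiv.Perm (Fin n), W σ ω
          = (N : ℝ) * ((n.factorial : ℝ) * S / ((n : ℝ) * ((n : ℝ) - 1))) := by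
        rw [hswap, Finset.sum_congr rfl (fun r _ => hinner r), Finset.sum_const,
          Finset.card_univ, Fintype.card_fin, nsmul_eq_mul]
      have hrhs : ∑ σ : Equiv.Perm (Fin n), (1 / (n.factorial : ℝ)) * (lam * W σ ω)
          = (1 / (n.factorial : ℝ)) * lam * ∑ σ : Equiv.Perm (Fin n), W σ ω := by
        rw [Finset.mul_sum]
        exact Finset.sum_congr rfl (fun σ _ => by ring)
      rw [hrhs, hsumW, hsdef]
      simp only [hUdef]
      rw [← hSdef]
      field_simp
    -- Jensen's inequality
    have hjensen : ∀ ω, Real.exp (s * U k ω)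
        ≤ ∑ σ : Equiv.Perm (Fin n), (1 / (n.factorial : ℝ)) * Real.exp (lam * W σ ω) := by
      intro ω
      have h₁ : ∑ _σ : Equiv.Perm (Fin n), (1 / (n.factorial : ℝ)) = 1 := by
        rw [Finset.sum_const, Finset.card_univ, Fintype.card_perm, Fintype.card_fin,
          nsmul_eq_mul]
        field_simp
      have hj := convexOn_exp.map_sum_le (t := (univ : Finset (Equiv.Perm (Fin n))))
        (w := fun _ => 1 / (n.factorial : ℝ)) (p := fun σ => lam * W σ ω)
        (fun _ _ => by positivity) h₁ (fun _ _ => Set.mem_univ _)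
      rw [hWkey ω]
      simpa [smul_eq_mul] using hj
    -- each permutation integral equals M k ^ N
    set f : (𝒳 × 𝒴) × 𝒳 × 𝒴 → ℝ :=
      fun v => Real.exp (lam * (ψ k (v.1.1, v.2.1)) ^ 2) with hfdef
    have hfmeas : Measurable f := by
      apply Real.measurable_exp.comp
      exact (((hψmeas k).comp ((measurable_fst.comp measurable_fst).prodMk
        (measurable_fst.comp measurable_snd))).pow_const 2).const_mul lam
    have hfac : ∀ (i j : Fin n), i ≠ j →
        ∫ ω, f (Z i ω, Z j ω) ∂P = M k := by
      intro i j hij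
      have hpair : Measure.map (fun ω => (Z i ω, Z j ω)) P = μ.prod μ := by
        have hind := hZindep.indepFun hij
        rw [indepFun_iff_map_prod_eq_prod_map_map (hZmeas i).aemeasurable
          (hZmeas j).aemeasurable] at hind
        rw [hind, hZid i, hZid j]
      have h1 : ∫ ω, f (Z i ω, Z j ω) ∂P
          = ∫ v, f v ∂(Measure.map (fun ω => (Z i ω, Z j ω)) P) :=
        (integral_map ((hZmeas i).prodMk (hZmeas j)).aemeasurable
          hfmeas.aestronglyMeasurable).symm
      rw [h1, hpair]
      have hmp : ν.prod ν = (μ.prod μ).map (Prod.map Prod.fst Prod.fst) := by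
        rw [hνdef]
        exact Measure.map_prod_map _ _ measurable_fst measurable_fst
      have hgm : Measurable (fun q : 𝒳 × 𝒳 => Real.exp (lam * (ψ k q) ^ 2)) :=
        Real.measurable_exp.comp (((hψmeas k).pow_const 2).const_mul lam)
      rw [hMdef]
      show ∫ v, f v ∂(μ.prod μ) = ∫ q, Real.exp (lam * (ψ k q) ^ 2) ∂(ν.prod ν)
      rw [hmp, integral_map (measurable_fst.prodMap measurable_fst).aemeasurable
        hgm.aestronglyMeasurable]
      rfl
    have hWint : ∀ σ : Equiv.Perm (Fin n),
        ∫ ω, Real.exp (lam * W σ ω) ∂P = M k ^ N := by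
      intro σ
      have hrw : (fun ω => Real.exp (lam * W σ ω))
          = fun ω => ∏ r : Fin N, f (Z (σ (eoF hNn r)) ω, Z (σ (ooF hNn r)) ω) := by
        funext ω
        rw [hWdef, Finset.mul_sum, Real.exp_sum]
      have hd : ∀ r r' : Fin N, r ≠ r' →
          σ (eoF hNn r) ≠ σ (eoF hNn r') ∧ σ (eoF hNn r) ≠ σ (ooF hNn r') ∧
          σ (ooF hNn r) ≠ σ (eoF hNn r') ∧ σ (ooF hNn r) ≠ σ (ooF hNn r') := by
        intro r r' hrr'
        have hval : r.1 ≠ r'.1 := fun h => hrr' (Fin.ext h)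
        refine ⟨?_, ?_, ?_, ?_⟩ <;>
          · intro h
            have h2 := σ.injective h
            rw [Fin.ext_iff] at h2
            simp only [eoF_val, ooF_val] at h2
            omega
      rw [hrw, integral_prod_pairs hZmeas hZindep
        (fun r => σ (eoF hNn r)) (fun r => σ (ooF hNn r)) hd f hfmeas univ]
      rw [Finset.prod_congr rfl (fun r _ => hfac _ _ (σ.injective.ne (heoo r))),
        Finset.prod_const, Finset.card_univ, Fintype.card_fin]
    -- combining: mgf bound
    have hmgf : mgf (U k) P s ≤ M k ^ N := by
      have hintW : ∀ σ : Equiv.Perm (Fin n),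
          Integrable (fun ω => Real.exp (lam * W σ ω)) P := by
        intro σ
        apply integrable_of_bounded
          ((hWmeas σ).const_mul lam).exp.aestronglyMeasurable
          (Real.exp (lam * ((N : ℝ) * b)))
        intro ω
        rw [abs_of_pos (Real.exp_pos _)]
        exact Real.exp_le_exp.2 (mul_le_mul_of_nonneg_left (hWb σ ω) hlampos.le)
      have hRHSint : Integrable (fun ω => ∑ σ : Equiv.Perm (Fin n),
          (1 / (n.factorial : ℝ)) * Real.exp (lam * W σ ω)) P :=
        integrable_finset_sum _ (fun σ _ => (hintW σ).const_mul _)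
      have h1 : mgf (U k) P s ≤ ∫ ω, (∑ σ : Equiv.Perm (Fin n),
          (1 / (n.factorial : ℝ)) * Real.exp (lam * W σ ω)) ∂P :=
        integral_mono hint hRHSint hjensen
      rw [integral_finset_sum _ (fun σ _ => (hintW σ).const_mul _)] at h1
      calc mgf (U k) P s ≤ ∑ σ : Equiv.Perm (Fin n),
            ∫ ω, (1 / (n.factorial : ℝ)) * Real.exp (lam * W σ ω) ∂P := h1
        _ = ∑ _σ : Equiv.Perm (Fin n), (1 / (n.factorial : ℝ)) * M k ^ N := by
            refine Finset.sum_congr rfl (fun σ _ => ?_)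
            rw [integral_const_mul, hWint σ]
        _ = M k ^ N := by
            rw [Finset.sum_const, Finset.card_univ, Fintype.card_perm, Fintype.card_fin,
              nsmul_eq_mul]
            field_simp
    -- numeric conclusion
    have hexp : Real.exp (-s * a) * M k ^ N ≤ 1 / (m : ℝ) ^ 3 := by
      have h1 : M k ^ N ≤ Real.exp (lam * a / 2) ^ N :=
        pow_le_pow_left₀ (hM0 k) (hMle k) N
      have h2 : Real.exp (-s * a) * M k ^ N
          ≤ Real.exp (-s * a) * Real.exp (lam * a / 2) ^ N :=
        mul_le_mul_of_nonneg_left h1 (Real.exp_pos _).le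
      have h3 : Real.exp (-s * a) * Real.exp (lam * a / 2) ^ N
          = Real.exp (-s * a + (N : ℝ) * (lam * a / 2)) := by
        rw [← Real.exp_nat_mul, ← Real.exp_add]
      have h4 : -s * a + (N : ℝ) * (lam * a / 2) = -((N : ℝ) * lam * a / 2) := by
        rw [hsdef]; ring
      have hlamn : lam * (n : ℝ) = Real.log m := by
        rw [hlamdef, hbdef]; field_simp
      have h5 : 3 * Real.log m ≤ (N : ℝ) * lam * a / 2 := by
        have hq1 : Real.log m / 4 ≤ (N : ℝ) * lam := by
          have h := mul_le_mul_of_nonneg_right hNge hlampos.le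
          rw [div_mul_eq_mul_div, mul_comm (n : ℝ) lam, hlamn] at h
          exact h
        nlinarith [hlogm.le, ha144, mul_le_mul_of_nonneg_right hq1 (by linarith : (0:ℝ) ≤ a)]
      have h6 : Real.exp (-((N : ℝ) * lam * a / 2)) ≤ Real.exp (-(3 * Real.log m)) :=
        Real.exp_le_exp.2 (by linarith)
      have h7 : Real.exp (-(3 * Real.log m)) = 1 / (m : ℝ) ^ 3 := by
        rw [Real.exp_neg, show (3 : ℝ) * Real.log m = (3 : ℕ) * Real.log m by norm_num,
          Real.exp_nat_mul, Real.exp_log hmpos, one_div]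
      rw [h3, h4] at h2
      calc Real.exp (-s * a) * M k ^ N ≤ Real.exp (-((N : ℝ) * lam * a / 2)) := h2
        _ ≤ Real.exp (-(3 * Real.log m)) := h6
        _ = 1 / (m : ℝ) ^ 3 := h7
    calc (P {ω | a ≤ U k ω}).toReal ≤ Real.exp (-s * a) * mgf (U k) P s := hcher
      _ ≤ Real.exp (-s * a) * M k ^ N :=
          mul_le_mul_of_nonneg_left hmgf (Real.exp_pos _).le
      _ ≤ 1 / (m : ℝ) ^ 3 := hexp
  -- union bound and conclusion
  have hunion : P {ω | 2 * max C 6 < max (Chat ω) 6} ≤ ∑ k : Fin m, P {ω | a ≤ U k ω} :=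
    (measure_mono hsub).trans ((measure_iUnion_le _).trans_eq (tsum_fintype _))
  have hfin : (∑ k : Fin m, P {ω | a ≤ U k ω}) ≠ ⊤ := by
    refine (ENNReal.sum_lt_top.2 (fun k _ => ?_)).ne
    exact measure_lt_top _ _
  calc (P {ω | 2 * max C 6 < max (Chat ω) 6}).toReal
      ≤ (∑ k : Fin m, P {ω | a ≤ U k ω}).toReal := ENNReal.toReal_mono hfin hunion
    _ = ∑ k : Fin m, (P {ω | a ≤ U k ω}).toReal :=
        ENNReal.toReal_sum (fun k _ => measure_ne_top _ _)
    _ ≤ ∑ _k : Fin m, 1 / (m : ℝ) ^ 3 := Finset.sum_le_sum (fun k _ => hkey k)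
    _ = (m : ℝ) * (1 / (m : ℝ) ^ 3) := by
        rw [Finset.sum_const, Finset.card_univ, Fintype.card_fin, nsmul_eq_mul]
    _ = 1 / (m : ℝ) ^ 2 := by field_simp

end
end

section
/- Let (X,Y), (X',Y') be i.i.d. random vectors with values in 𝒳×𝒴, 𝒳 ⊂ ℝ^d, 𝒴 ⊂ ℝ, with P(Y = Y') = 0, let η(x,x') = P(Y > Y' | X = x, X' = x'), and let f⁰(x,x') = 1 if η(x,x') > 1/2 and f⁰(x,x') = −1 otherwise. For the hinge loss φ(t) = max(0, 1−t) and any measurable f : 𝒳×𝒳 → ℝ with sup_{x,x'} |f(x,x')| ≤ 1, the excess risk satisfies Q(f) − Q(f⁰) = E [ |f(X,X') − f⁰(X,X')| · |2η(X,X') − 1| ]. -/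
open MeasureTheory ProbabilityTheory
open scoped ENNReal NNReal

lemma measurable_realSign : Measurable Real.sign := by
  have : Real.sign = fun r : ℝ => if r < 0 then (-1 : ℝ) else if 0 < r then 1 else 0 := rfl
  rw [this]
  exact Measurable.ite (measurableSet_lt measurable_id measurable_const) measurable_const
    (Measurable.ite (measurableSet_lt measurable_const measurable_id) measurable_const
      measurable_const)

lemma hinge_aux {Ω α : Type*} [MeasurableSpace Ω] [MeasurableSpace α]
    (P : Measure Ω) [IsProbabilityMeasure P]
    (V : Ω → α) (hV : Measurable V)
    (Yr Y'r : Ω → ℝ) (hYr : Measurable Yr) (hY'r : Measurable Y'r)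
    (hYY' : P {ω | Yr ω = Y'r ω} = 0)
    (η : α → ℝ) (hηmeas : Measurable η) (hη01 : ∀ p, 0 ≤ η p ∧ η p ≤ 1)
    (hη : ∀ A : Set α, MeasurableSet A →
      (P {ω | V ω ∈ A ∧ Y'r ω < Yr ω}).toReal = ∫ q in A, η q ∂(Measure.map V P))
    (f0 : α → ℝ) (hf0 : ∀ q, f0 q = if 1 / 2 < η q then 1 else -1)
    (f : α → ℝ) (hfmeas : Measurable f) (hfbd : ∀ q, |f q| ≤ 1) :
    (∫ ω, max 0 (1 - Real.sign (Yr ω - Y'r ω) * f (V ω)) ∂P) -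
      (∫ ω, max 0 (1 - Real.sign (Yr ω - Y'r ω) * f0 (V ω)) ∂P) =
      ∫ ω, |f (V ω) - f0 (V ω)| * |2 * η (V ω) - 1| ∂P := by
  classical
  have hs : Measurable fun ω => Real.sign (Yr ω - Y'r ω) :=
    measurable_realSign.comp (hYr.sub hY'r)
  have hs1 : ∀ ω, |Real.sign (Yr ω - Y'r ω)| ≤ 1 := by
    intro ω
    rcases Real.sign_apply_eq (Yr ω - Y'r ω) with h | h | h <;> simp [h]
  have hf0meas : Measurable f0 := by
    have : f0 = fun q => if 1 / 2 < η q then (1 : ℝ) else -1 := funext hf0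
    rw [this]
    exact Measurable.ite (measurableSet_lt measurable_const hηmeas) measurable_const
      measurable_const
  have hf0bd : ∀ q, |f0 q| ≤ 1 := by
    intro q; rw [hf0]; split <;> simp
  -- integrability helper
  have hint : ∀ h : Ω → ℝ, Measurable h → ∀ C : ℝ, (∀ ω, |h ω| ≤ C) → Integrable h P := by
    intro h hm C hC
    exact (integrable_const C).mono' hm.aestronglyMeasurable
      (ae_of_all _ fun ω => by simpa [Real.norm_eq_abs] using hC ω)
  -- Step A : remove the max
  have hmax : ∀ g : α → ℝ, (∀ q, |g q| ≤ 1) →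
      (fun ω => max 0 (1 - Real.sign (Yr ω - Y'r ω) * g (V ω))) =
        fun ω => 1 - Real.sign (Yr ω - Y'r ω) * g (V ω) := by
    intro g hg
    funext ω
    have h1 : |Real.sign (Yr ω - Y'r ω) * g (V ω)| ≤ 1 := by
      rw [abs_mul]
      calc |Real.sign (Yr ω - Y'r ω)| * |g (V ω)| ≤ 1 * 1 :=
            mul_le_mul (hs1 ω) (hg _) (abs_nonneg _) zero_le_one
        _ = 1 := one_mul 1
    have h2 := (abs_le.mp h1).2
    exact max_eq_right (by linarith)
  -- the event {Y' < Y}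
  set E : Set Ω := {ω | Y'r ω < Yr ω} with hEdef
  have hE : MeasurableSet E := measurableSet_lt hY'r hYr
  -- core : set-integral over E equals weighted integral by η
  have core : ∀ g : α → ℝ, Measurable g →
      ∫ ω in E, g (V ω) ∂P = ∫ ω, η (V ω) * g (V ω) ∂P := by
    intro g hgmeas
    set μ : Measure α := Measure.map V P with hμdef
    haveI : IsProbabilityMeasure μ := Measure.isProbabilityMeasure_map hV.aemeasurable
    have hηint : ∀ A : Set α, Integrable η (μ.restrict A) := by
      intro A
      refine (integrable_const (1 : ℝ)).mono' hηmeas.aestronglyMeasurable ?_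
      exact ae_of_all _ fun q => by
        simpa [Real.norm_eq_abs, abs_of_nonneg (hη01 q).1] using (hη01 q).2
    have hν : Measure.map V (P.restrict E) = μ.withDensity (fun q => ENNReal.ofReal (η q)) := by
      ext A hA
      rw [Measure.map_apply hV hA, Measure.restrict_apply (hV hA), withDensity_apply _ hA]
      have h1 : V ⁻¹' A ∩ E = {ω | V ω ∈ A ∧ Y'r ω < Yr ω} := rfl
      rw [h1, ← ofReal_integral_eq_lintegral_ofReal (hηint A)
        (ae_of_all _ fun q => (hη01 q).1), ← hη A hA,
        ENNReal.ofReal_toReal (measure_ne_top P _)]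
    calc ∫ ω in E, g (V ω) ∂P
        = ∫ q, g q ∂(Measure.map V (P.restrict E)) := by
          rw [integral_map hV.aemeasurable hgmeas.aestronglyMeasurable]
      _ = ∫ q, g q ∂(μ.withDensity (fun q => ((η q).toNNReal : ℝ≥0∞))) := by rw [hν]; rfl
      _ = ∫ q, (η q).toNNReal • g q ∂μ :=
          integral_withDensity_eq_integral_smul hηmeas.real_toNNReal g
      _ = ∫ q, η q * g q ∂μ := by
          congr 1; funext q
          rw [NNReal.smul_def, Real.coe_toNNReal _ (hη01 q).1, smul_eq_mul]
      _ = ∫ ω, η (V ω) * g (V ω) ∂P := by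
          rw [hμdef, integral_map (f := fun q => η q * g q) hV.aemeasurable ((hηmeas.mul hgmeas)).aestronglyMeasurable]
  -- a.e. the two Y values differ
  have hne : ∀ᵐ ω ∂P, Yr ω ≠ Y'r ω := by
    rw [ae_iff]
    simpa only [ne_eq, not_not] using hYY'
  -- Step B : replace the sign by 2η - 1
  have key : ∀ g : α → ℝ, Measurable g → (∀ q, |g q| ≤ 2) →
      ∫ ω, Real.sign (Yr ω - Y'r ω) * g (V ω) ∂P =
        ∫ ω, (2 * η (V ω) - 1) * g (V ω) ∂P := by
    intro g hg hgbd
    have hgV : Integrable (fun ω => g (V ω)) P := hint _ (hg.comp hV) 2 fun ω => hgbd _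
    have hηgV : Integrable (fun ω => η (V ω) * g (V ω)) P := by
      refine hint _ ((hηmeas.comp hV).mul (hg.comp hV)) 2 fun ω => ?_
      rw [abs_mul]
      calc |η (V ω)| * |g (V ω)| ≤ 1 * 2 := by
            refine mul_le_mul ?_ (hgbd _) (abs_nonneg _) zero_le_one
            rw [abs_of_nonneg (hη01 _).1]; exact (hη01 _).2
        _ = 2 := by norm_num
    have hI : Integrable (fun ω => E.indicator (fun ω => g (V ω)) ω) P := hgV.indicator hE
    have hcongr : (fun ω => Real.sign (Yr ω - Y'r ω) * g (V ω)) =ᵐ[P]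
        fun ω => 2 * E.indicator (fun ω => g (V ω)) ω - g (V ω) := by
      filter_upwards [hne] with ω hω
      by_cases h : Y'r ω < Yr ω
      · have hmem : ω ∈ E := h
        rw [Real.sign_of_pos (sub_pos.mpr h), Set.indicator_of_mem hmem]
        ring
      · have h2 : Yr ω < Y'r ω := lt_of_le_of_ne (not_lt.mp h) hω
        have hmem : ω ∉ E := h
        rw [Real.sign_of_neg (sub_neg.mpr h2), Set.indicator_of_notMem hmem]
        ring
    calc ∫ ω, Real.sign (Yr ω - Y'r ω) * g (V ω) ∂P
        = ∫ ω, 2 * E.indicator (fun ω => g (V ω)) ω - g (V ω) ∂P := integral_congr_ae hcongr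
      _ = 2 * ∫ ω, E.indicator (fun ω => g (V ω)) ω ∂P - ∫ ω, g (V ω) ∂P := by
          rw [integral_sub (hI.const_mul 2) hgV, integral_const_mul]
      _ = 2 * ∫ ω in E, g (V ω) ∂P - ∫ ω, g (V ω) ∂P := by rw [integral_indicator hE]
      _ = 2 * ∫ ω, η (V ω) * g (V ω) ∂P - ∫ ω, g (V ω) ∂P := by rw [core g hg]
      _ = ∫ ω, (2 * η (V ω) - 1) * g (V ω) ∂P := by
          rw [← integral_const_mul, ← integral_sub (hηgV.const_mul 2) hgV]
          congr 1; funext ω; ring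
  -- pointwise final identity
  have hpt : ∀ q, (2 * η q - 1) * (f0 q - f q) = |f q - f0 q| * |2 * η q - 1| := by
    intro q
    obtain ⟨hfl, hfu⟩ := abs_le.mp (hfbd q)
    by_cases h : 1 / 2 < η q
    · rw [hf0 q, if_pos h, abs_of_pos (by linarith : (0:ℝ) < 2 * η q - 1),
        abs_of_nonpos (by linarith : f q - 1 ≤ 0)]
      ring
    · rw [hf0 q, if_neg h]
      push_neg at h
      rw [abs_of_nonpos (by linarith : 2 * η q - 1 ≤ 0),
        abs_of_nonneg (by linarith : (0:ℝ) ≤ f q - -1)]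
      ring
  -- assembly
  rw [hmax f hfbd, hmax f0 hf0bd]
  have hsf : Integrable (fun ω => Real.sign (Yr ω - Y'r ω) * f (V ω)) P := by
    refine hint _ (hs.mul (hfmeas.comp hV)) 1 fun ω => ?_
    rw [abs_mul]
    calc |Real.sign (Yr ω - Y'r ω)| * |f (V ω)| ≤ 1 * 1 :=
          mul_le_mul (hs1 ω) (hfbd _) (abs_nonneg _) zero_le_one
      _ = 1 := one_mul 1
  have hsf0 : Integrable (fun ω => Real.sign (Yr ω - Y'r ω) * f0 (V ω)) P := by
    refine hint _ (hs.mul (hf0meas.comp hV)) 1 fun ω => ?_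
    rw [abs_mul]
    calc |Real.sign (Yr ω - Y'r ω)| * |f0 (V ω)| ≤ 1 * 1 :=
          mul_le_mul (hs1 ω) (hf0bd _) (abs_nonneg _) zero_le_one
      _ = 1 := one_mul 1
  rw [integral_sub (integrable_const 1) hsf, integral_sub (integrable_const 1) hsf0]
  have hdiff : (∫ ω, (1 : ℝ) ∂P) - (∫ ω, Real.sign (Yr ω - Y'r ω) * f (V ω) ∂P) -
      ((∫ ω, (1 : ℝ) ∂P) - ∫ ω, Real.sign (Yr ω - Y'r ω) * f0 (V ω) ∂P) =
      ∫ ω, Real.sign (Yr ω - Y'r ω) * (f0 (V ω) - f (V ω)) ∂P := by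
    rw [show (fun ω => Real.sign (Yr ω - Y'r ω) * (f0 (V ω) - f (V ω))) =
      fun ω => Real.sign (Yr ω - Y'r ω) * f0 (V ω) -
        Real.sign (Yr ω - Y'r ω) * f (V ω) from funext fun ω => by ring,
      integral_sub hsf0 hsf]
    ring
  rw [hdiff, key (fun q => f0 q - f q) (hf0meas.sub hfmeas) (fun q => by
    calc |f0 q - f q| ≤ |f0 q| + |f q| := abs_sub _ _
      _ ≤ 1 + 1 := add_le_add (hf0bd q) (hfbd q)
      _ = 2 := by norm_num)]
  congr 1
  funext ω
  exact hpt ((V ω))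


/-- **Excess hinge ranking risk formula.**
Let `(X, Y), (X', Y')` be i.i.d. random vectors with values in `𝒳 × 𝒴`, `𝒳 ⊆ ℝ^d`,
`𝒴 ⊆ ℝ`, with `P(Y = Y') = 0`, let `η(x, x') = P(Y > Y' | X = x, X' = x')` and let
`f⁰(x, x') = 1` if `η(x, x') > 1/2`, `f⁰(x, x') = −1` otherwise. For the hinge loss
`φ(t) = max(0, 1 − t)` and any measurable `f : 𝒳 × 𝒳 → ℝ` with `sup |f| ≤ 1`, the excess
risk satisfies `Q(f) − Q(f⁰) = E[|f(X,X') − f⁰(X,X')|·|2η(X,X') − 1|]`. -/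
theorem hinge_excess_risk_formula
    {Ω : Type*} [MeasurableSpace Ω] {P : Measure Ω} [IsProbabilityMeasure P]
    (d : ℕ) (𝒳 : Set (Fin d → ℝ)) (𝒴 : Set ℝ)
    -- the i.i.d. pair `(X, Y) = W`, `(X', Y') = W'`
    (W W' : Ω → 𝒳 × 𝒴) (hWmeas : Measurable W) (hW'meas : Measurable W')
    (hid : Measure.map W P = Measure.map W' P)
    (hindep : IndepFun W W' P)
    -- `P(Y = Y') = 0`
    (hYY' : P {ω | ((W ω).2 : ℝ) = ((W' ω).2 : ℝ)} = 0)
    -- `η(x, x') = P(Y > Y' | X = x, X' = x')`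
    (η : 𝒳 × 𝒳 → ℝ) (hηmeas : Measurable η)
    (hη01 : ∀ p, 0 ≤ η p ∧ η p ≤ 1)
    (hη : ∀ A : Set (𝒳 × 𝒳), MeasurableSet A →
      (P {ω | ((W ω).1, (W' ω).1) ∈ A ∧ ((W' ω).2 : ℝ) < ((W ω).2 : ℝ)}).toReal =
        ∫ q in A, η q ∂(Measure.map (fun ω => ((W ω).1, (W' ω).1)) P))
    -- the Bayes rule `f⁰`
    (f0 : 𝒳 × 𝒳 → ℝ)
    (hf0 : ∀ q, f0 q = if 1 / 2 < η q then 1 else -1)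
    -- `f` is measurable with `sup |f| ≤ 1`
    (f : 𝒳 × 𝒳 → ℝ) (hfmeas : Measurable f) (hfbd : ∀ q, |f q| ≤ 1) :
    (∫ ω, max 0 (1 - Real.sign (((W ω).2 : ℝ) - ((W' ω).2 : ℝ)) *
        f ((W ω).1, (W' ω).1)) ∂P) -
      (∫ ω, max 0 (1 - Real.sign (((W ω).2 : ℝ) - ((W' ω).2 : ℝ)) *
        f0 ((W ω).1, (W' ω).1)) ∂P) =
      ∫ ω, |f ((W ω).1, (W' ω).1) - f0 ((W ω).1, (W' ω).1)| *
        |2 * η ((W ω).1, (W' ω).1) - 1| ∂P := by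
  have hV : Measurable fun ω => ((W ω).1, (W' ω).1) :=
    (measurable_fst.comp hWmeas).prodMk (measurable_fst.comp hW'meas)
  have hYr : Measurable fun ω => ((W ω).2 : ℝ) :=
    measurable_subtype_coe.comp (measurable_snd.comp hWmeas)
  have hY'r : Measurable fun ω => ((W' ω).2 : ℝ) :=
    measurable_subtype_coe.comp (measurable_snd.comp hW'meas)
  exact hinge_aux P _ hV _ _ hYr hY'r hYY' η hηmeas hη01 hη f0 hf0 f hfmeas hfbd
end

section
/- Let X, X' be i.i.d. random vectors in 𝒳 ⊂ ℝ^d, let η : 𝒳×𝒳 → [0,1] and let f, f⁰ : 𝒳×𝒳 → ℝ be measurable with |f(x,x') − f⁰(x,x')| ≤ 2 for all x, x'. Fix α ∈ (0,1) and suppose there is B(α) > 0 such that E_{X'} |2η(x,X') − 1|^{−α} ≤ B(α) for every x ∈ 𝒳. Then ||f − f⁰||_c² ≤ B(α)·2^{2−α}·( E[ |f(X,X') − f⁰(X,X')|·|2η(X,X')−1| ] )^α; equivalently, if Q(f) − Q(f⁰) = E[ |f − f⁰|·|2η − 1| ], then Q(f) − Q(f⁰) ≥ [ B(α)·2^{2−α}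 ]^{−1/α} · ||f − f⁰||_c^{2/α}. -/
open MeasureTheory ProbabilityTheory

open scoped ENNReal

/-- Per-x Hölder step. -/
lemma perx_holder {S : Type*} [MeasurableSpace S] (μ : Measure S) [IsProbabilityMeasure μ]
    (φ w : S → ℝ≥0∞) (hφ : Measurable φ) (hw : Measurable w)
    (hφbd : ∀ y, φ y ≤ 2) (hwtop : ∀ y, w y ≠ ⊤)
    {α B : ℝ} (hα0 : 0 < α) (hα1 : α < 1) (hB0 : 0 < B)
    (hB : ∫⁻ y, w y ^ (-α) ∂μ ≤ ENNReal.ofReal B) :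
    ∫⁻ y, φ y ∂μ ≤
      (∫⁻ y, φ y * w y ∂μ) ^ (α / (1 + α)) *
        ENNReal.ofReal (2 * B) ^ (1 - α / (1 + α)) := by
  set a : ℝ := α / (1 + α) with ha_def
  have h1α : (0:ℝ) < 1 + α := by linarith
  have ha0 : 0 < a := div_pos hα0 h1α
  have ha1 : a < 1 := by
    rw [ha_def, div_lt_one h1α]; linarith
  have h1a : 0 < 1 - a := by linarith
  -- a.e. positivity of w
  have hfin : ∫⁻ y, w y ^ (-α) ∂μ ≠ ⊤ :=
    (lt_of_le_of_lt hB ENNReal.ofReal_lt_top).ne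
  have hwm : Measurable fun y => w y ^ (-α) := hw.pow measurable_const
  have hwpos : ∀ᵐ y ∂μ, w y ≠ 0 := by
    filter_upwards [ae_lt_top hwm hfin] with y hy
    intro h0
    rw [h0, ENNReal.zero_rpow_of_neg (neg_neg_iff_pos.mpr hα0)] at hy
    exact absurd hy (lt_irrefl _)
  -- the two Hölder factors
  set F₁ : S → ℝ≥0∞ := fun y => (φ y * w y) ^ a with hF₁
  set F₂ : S → ℝ≥0∞ := fun y => (φ y * w y ^ (-α)) ^ (1 - a) with hF₂
  have hprod : ∀ᵐ y ∂μ, F₁ y * F₂ y = φ y := by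
    filter_upwards [hwpos] with y hy0
    have hwfin : w y ≠ ⊤ := hwtop y
    have hφtop : φ y ≠ ⊤ := (lt_of_le_of_lt (hφbd y) (by norm_num)).ne
    show (φ y * w y) ^ a * (φ y * w y ^ (-α)) ^ (1 - a) = φ y
    rw [ENNReal.mul_rpow_of_nonneg _ _ ha0.le, ENNReal.mul_rpow_of_nonneg _ _ h1a.le]
    have e1 : φ y ^ a * w y ^ a * (φ y ^ (1 - a) * (w y ^ (-α)) ^ (1 - a)) =
        (φ y ^ a * φ y ^ (1 - a)) * (w y ^ a * (w y ^ (-α)) ^ (1 - a)) := by ring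
    rw [e1]
    rw [← ENNReal.rpow_add_of_nonneg a (1 - a) ha0.le h1a.le]
    rw [← ENNReal.rpow_mul]
    rw [← ENNReal.rpow_add _ _ hy0 hwfin]
    have e2 : a + -α * (1 - a) = 0 := by
      rw [ha_def]; field_simp; ring
    have e3 : a + (1 - a) = 1 := by ring
    rw [e2, e3, ENNReal.rpow_one, ENNReal.rpow_zero, mul_one]
  have hpq : Real.HolderConjugate (1 / a) (1 / (1 - a)) := by
    exact Real.holderConjugate_one_div ha0 h1a (by ring)
  have hF₁m : AEMeasurable F₁ μ := ((hφ.mul hw).pow measurable_const).aemeasurable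
  have hF₂m : AEMeasurable F₂ μ :=
    ((hφ.mul (hw.pow measurable_const)).pow measurable_const).aemeasurable
  have hhold := ENNReal.lintegral_mul_le_Lp_mul_Lq μ hpq hF₁m hF₂m
  have hL : ∫⁻ y, φ y ∂μ = ∫⁻ y, (F₁ * F₂) y ∂μ :=
    (lintegral_congr_ae (hprod.mono fun y hy => hy.symm))
  rw [hL]
  refine le_trans hhold ?_
  have hone : ∀ y, F₁ y ^ (1 / a) = φ y * w y := by
    intro y
    rw [hF₁, ← ENNReal.rpow_mul, mul_one_div, div_self ha0.ne', ENNReal.rpow_one]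
  have htwo : ∀ y, F₂ y ^ (1 / (1 - a)) = φ y * w y ^ (-α) := by
    intro y
    rw [hF₂, ← ENNReal.rpow_mul, mul_one_div, div_self h1a.ne', ENNReal.rpow_one]
  have h2nd : ∫⁻ y, F₂ y ^ (1 / (1 - a)) ∂μ ≤ ENNReal.ofReal (2 * B) := by
    simp only [htwo]
    calc ∫⁻ y, φ y * w y ^ (-α) ∂μ ≤ ∫⁻ y, 2 * w y ^ (-α) ∂μ := by
          exact lintegral_mono fun y => mul_le_mul_left (hφbd y) _
      _ = 2 * ∫⁻ y, w y ^ (-α) ∂μ := lintegral_const_mul' _ _ (by norm_num)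
      _ ≤ 2 * ENNReal.ofReal B := by exact mul_le_mul_right hB _
      _ = ENNReal.ofReal (2 * B) := by
          rw [ENNReal.ofReal_mul (by norm_num : (0:ℝ) ≤ 2)]
          norm_num
  simp only [hone]
  rw [one_div_one_div, one_div_one_div]
  exact mul_le_mul_right (ENNReal.rpow_le_rpow h2nd h1a.le) _

lemma key_margin {S : Type*} [MeasurableSpace S] (μ : Measure S) [IsProbabilityMeasure μ]
    (G W : S × S → ℝ) (hG : Measurable G) (hW : Measurable W)
    (hGbd : ∀ p, |G p| ≤ 2) (hW0 : ∀ p, 0 ≤ W p) (hW1 : ∀ p, W p ≤ 1)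
    {α B : ℝ} (hα0 : 0 < α) (hα1 : α < 1) (hB0 : 0 < B)
    (hB : ∀ x, ∫⁻ y, (ENNReal.ofReal (W (x, y))) ^ (-α) ∂μ ≤ ENNReal.ofReal B) :
    ∫ x, (∫ y, G (x, y) ∂μ) ^ 2 ∂μ ≤
      B * 2 ^ (2 - α) * (∫ p, |G p| * W p ∂(μ.prod μ)) ^ α := by
  have h1α : (0:ℝ) < 1 + α := by linarith
  set a : ℝ := α / (1 + α) with ha_def
  have ha0 : 0 < a := div_pos hα0 h1α
  have ha1 : a < 1 := by rw [ha_def, div_lt_one h1α]; linarith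
  have h2a : 2 * a < 1 := by
    rw [ha_def, show (2:ℝ) * (α / (1 + α)) = 2 * α / (1 + α) by ring, div_lt_one h1α]; linarith
  have h2a0 : 0 < 2 * a := by linarith
  set H : S × S → ℝ := fun p => |G p| * W p with hH_def
  have hHm : Measurable H := hG.abs.mul hW
  have hH0 : ∀ p, 0 ≤ H p := fun p => mul_nonneg (abs_nonneg _) (hW0 p)
  have hHbd : ∀ p, H p ≤ 2 := fun p => by
    calc H p ≤ 2 * 1 := mul_le_mul (hGbd p) (hW1 p) (hW0 p) (by norm_num)
      _ = 2 := by norm_num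
  set Q : ℝ := ∫ p, H p ∂(μ.prod μ) with hQ_def
  have hQ0 : 0 ≤ Q := integral_nonneg hH0
  have hHint : Integrable H (μ.prod μ) := by
    refine (integrable_const (2:ℝ)).mono' hHm.aestronglyMeasurable (ae_of_all _ fun p => ?_)
    rw [Real.norm_eq_abs, abs_of_nonneg (hH0 p)]; exact hHbd p
  have hQof : ∫⁻ p, ENNReal.ofReal (H p) ∂(μ.prod μ) = ENNReal.ofReal Q :=
    (ofReal_integral_eq_lintegral_ofReal hHint (ae_of_all _ hH0)).symm
  set J : S → ℝ≥0∞ := fun x => ∫⁻ y, ENNReal.ofReal (H (x, y)) ∂μ with hJ_def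
  have hJm : Measurable J := hHm.ennreal_ofReal.lintegral_prod_right'
  have hJQ : ∫⁻ x, J x ∂μ = ENNReal.ofReal Q := by
    rw [← hQof]; exact (lintegral_prod _ hHm.ennreal_ofReal.aemeasurable).symm
  set I : S → ℝ := fun x => ∫ y, G (x, y) ∂μ with hI_def
  have hIm : StronglyMeasurable I := hG.stronglyMeasurable.integral_prod_right'
  have hGxm : ∀ x, Measurable fun y => G (x, y) := fun x => hG.comp measurable_prodMk_left
  have hGxint : ∀ x, Integrable (fun y => G (x, y)) μ := fun x => by
    refine (integrable_const (2:ℝ)).mono' (hGxm x).aestronglyMeasurable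
      (ae_of_all _ fun y => ?_)
    rw [Real.norm_eq_abs]; exact hGbd _
  have hIabs : ∀ x, |I x| ≤ ∫ y, |G (x, y)| ∂μ := fun x => by
    rw [hI_def, ← Real.norm_eq_abs]
    refine le_trans (norm_integral_le_integral_norm _) ?_
    simp [Real.norm_eq_abs]
  have hIbd : ∀ x, |I x| ≤ 2 := fun x => by
    refine le_trans (hIabs x) ?_
    calc ∫ y, |G (x, y)| ∂μ ≤ ∫ _, (2:ℝ) ∂μ :=
          integral_mono (hGxint x).abs (integrable_const _) fun y => hGbd _
      _ = 2 := by simp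
  set M : S → ℝ≥0∞ := fun x => ENNReal.ofReal |I x| with hM_def
  have hM : ∀ x, M x ≤ J x ^ a * ENNReal.ofReal (2 * B) ^ (1 - a) := by
    intro x
    have step1 : M x ≤ ∫⁻ y, ENNReal.ofReal |G (x, y)| ∂μ := by
      calc M x ≤ ENNReal.ofReal (∫ y, |G (x, y)| ∂μ) := ENNReal.ofReal_le_ofReal (hIabs x)
        _ = ∫⁻ y, ENNReal.ofReal |G (x, y)| ∂μ :=
            ofReal_integral_eq_lintegral_ofReal (hGxint x).abs
              (ae_of_all _ fun y => abs_nonneg _)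
    have step2 := perx_holder μ (fun y => ENNReal.ofReal |G (x, y)|)
      (fun y => ENNReal.ofReal (W (x, y)))
      ((hGxm x).abs.ennreal_ofReal) ((hW.comp measurable_prodMk_left).ennreal_ofReal)
      (fun y => by simpa using ENNReal.ofReal_le_ofReal (hGbd (x, y)))
      (fun y => ENNReal.ofReal_ne_top) hα0 hα1 hB0 (hB x)
    have heq : ∀ y, ENNReal.ofReal |G (x, y)| * ENNReal.ofReal (W (x, y)) =
        ENNReal.ofReal (H (x, y)) := fun y =>
      (ENNReal.ofReal_mul (abs_nonneg _)).symm
    simp only [heq] at step2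
    exact le_trans step1 step2
  set T : ℝ≥0∞ := ∫⁻ x, M x ^ 2 ∂μ with hT_def
  have hT4 : T ≤ 4 := by
    have hb : ∀ x, M x ^ 2 ≤ 4 := fun x => by
      have h2 : M x ≤ 2 := by
        calc M x ≤ ENNReal.ofReal 2 := ENNReal.ofReal_le_ofReal (hIbd x)
          _ = 2 := by norm_num
      calc M x ^ 2 ≤ 2 ^ 2 := pow_le_pow_left' h2 2
        _ = 4 := by norm_num
    calc T ≤ ∫⁻ _, (4:ℝ≥0∞) ∂μ := lintegral_mono hb
      _ = 4 := by simp
  set c : ℝ≥0∞ := ENNReal.ofReal (2 * B) ^ (1 - a) with hc_def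
  have hctop : c ≠ ⊤ := ENNReal.rpow_ne_top_of_nonneg (by linarith) ENNReal.ofReal_ne_top
  have hT2 : T ≤ ENNReal.ofReal (2 * B) ^ (2 * (1 - a)) * ENNReal.ofReal Q ^ (2 * a) := by
    have e1 : ∀ x, (J x ^ a * c) ^ 2 = c ^ 2 * J x ^ (2 * a) := by
      intro x
      rw [mul_pow, ← ENNReal.rpow_natCast (J x ^ a) 2, ← ENNReal.rpow_mul]
      rw [mul_comm]
      norm_num [mul_comm a 2]
    have step1 : T ≤ ∫⁻ x, c ^ 2 * J x ^ (2 * a) ∂μ := by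
      refine le_trans (lintegral_mono fun x => pow_le_pow_left' (hM x) 2) ?_
      exact le_of_eq (lintegral_congr fun x => e1 x)
    have step2 : ∫⁻ x, c ^ 2 * J x ^ (2 * a) ∂μ = c ^ 2 * ∫⁻ x, J x ^ (2 * a) ∂μ :=
      lintegral_const_mul' _ _ (by exact ENNReal.pow_ne_top hctop)
    have hpq2 : Real.HolderConjugate (1 / (2 * a)) (1 / (1 - 2 * a)) := by
      exact Real.holderConjugate_one_div h2a0 (by linarith) (by ring)
    have hold2 := ENNReal.lintegral_mul_le_Lp_mul_Lq μ hpq2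
      (f := fun x => J x ^ (2 * a)) (g := fun _ => 1)
      ((hJm.pow measurable_const).aemeasurable) aemeasurable_const
    have hf' : ∀ x, (J x ^ (2 * a)) ^ (1 / (2 * a)) = J x := fun x => by
      rw [← ENNReal.rpow_mul, mul_one_div, div_self h2a0.ne', ENNReal.rpow_one]
    simp only [hf', Pi.mul_apply, mul_one, ENNReal.one_rpow, lintegral_const, measure_univ,
      mul_one, ENNReal.one_rpow] at hold2
    have step3 : ∫⁻ x, J x ^ (2 * a) ∂μ ≤ (ENNReal.ofReal Q) ^ (2 * a) := by
      rw [← hJQ]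
      refine le_trans hold2 ?_
      rw [one_div_one_div]
    have hc2 : c ^ 2 = ENNReal.ofReal (2 * B) ^ (2 * (1 - a)) := by
      rw [hc_def, ← ENNReal.rpow_natCast (ENNReal.ofReal (2 * B) ^ (1 - a)) 2,
        ← ENNReal.rpow_mul]
      norm_num [mul_comm (1 - a) 2]
    calc T ≤ c ^ 2 * ∫⁻ x, J x ^ (2 * a) ∂μ := by rw [← step2]; exact step1
      _ ≤ c ^ 2 * (ENNReal.ofReal Q) ^ (2 * a) := mul_le_mul_right step3 _
      _ = _ := by rw [hc2]
  have hRHS0 : 0 ≤ B * 2 ^ (2 - α) * Q ^ α :=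
    mul_nonneg (mul_nonneg hB0.le (Real.rpow_nonneg (by norm_num) _)) (Real.rpow_nonneg hQ0 _)
  have hTfinal : T ≤ ENNReal.ofReal (B * 2 ^ (2 - α) * Q ^ α) := by
    by_cases hT0 : T = 0
    · rw [hT0]; exact zero_le
    have hTtop : T ≠ ⊤ := (lt_of_le_of_lt hT4 (by norm_num)).ne
    set lam : ℝ := (1 + α) / 2 with hlam_def
    have hlam0 : 0 < lam := by rw [hlam_def]; linarith
    have hlam1 : lam < 1 := by rw [hlam_def]; linarith
    have hsplit : T = T ^ (1 - lam) * T ^ lam := by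
      rw [← ENNReal.rpow_add _ _ hT0 hTtop]
      norm_num
    have e2lam : 2 * (1 - a) * lam = 1 := by
      rw [ha_def, hlam_def]; field_simp; ring
    have ealam : 2 * a * lam = α := by
      rw [ha_def, hlam_def]; field_simp
    calc T = T ^ (1 - lam) * T ^ lam := hsplit
      _ ≤ (4:ℝ≥0∞) ^ (1 - lam) *
          (ENNReal.ofReal (2 * B) ^ (2 * (1 - a)) * ENNReal.ofReal Q ^ (2 * a)) ^ lam :=
        mul_le_mul' (ENNReal.rpow_le_rpow hT4 (by linarith)) (ENNReal.rpow_le_rpow hT2 hlam0.le)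
      _ = (4:ℝ≥0∞) ^ (1 - lam) * (ENNReal.ofReal (2 * B) * ENNReal.ofReal Q ^ α) := by
        rw [ENNReal.mul_rpow_of_nonneg _ _ hlam0.le, ← ENNReal.rpow_mul, ← ENNReal.rpow_mul,
          e2lam, ealam, ENNReal.rpow_one]
      _ = ENNReal.ofReal (4 ^ (1 - lam)) * (ENNReal.ofReal (2 * B) * ENNReal.ofReal (Q ^ α)) := by
        rw [ENNReal.ofReal_rpow_of_nonneg hQ0 hα0.le]
        congr 1
        rw [← ENNReal.ofReal_rpow_of_nonneg (by norm_num : (0:ℝ) ≤ 4)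
          (by linarith : (0:ℝ) ≤ 1 - lam)]
        norm_num
      _ = ENNReal.ofReal (4 ^ (1 - lam) * (2 * B) * Q ^ α) := by
        rw [← ENNReal.ofReal_mul (mul_nonneg (by norm_num : (0:ℝ) ≤ 2) hB0.le),
          ← ENNReal.ofReal_mul (Real.rpow_nonneg (by norm_num : (0:ℝ) ≤ 4) _)]
        congr 1
        ring
      _ = ENNReal.ofReal (B * 2 ^ (2 - α) * Q ^ α) := by
        congr 1
        have h4 : (4:ℝ) ^ (1 - lam) = 2 ^ (1 - α) := by
          rw [show (4:ℝ) = 2 ^ (2:ℝ) by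
              rw [show (2:ℝ) = ((2:ℕ):ℝ) by norm_num, Real.rpow_natCast]; norm_num,
            ← Real.rpow_mul (by norm_num)]
          congr 1
          rw [hlam_def]; ring
        have h2' : (2:ℝ) ^ (2 - α) = 2 ^ (1 - α) * 2 := by
          rw [show (2:ℝ) - α = (1 - α) + 1 by ring, Real.rpow_add (by norm_num), Real.rpow_one]
        rw [h4, h2']; ring
  -- transfer to reals
  have hIint : Integrable (fun x => I x ^ 2) μ := by
    refine (integrable_const (4:ℝ)).mono' (hIm.measurable.pow_const 2).aestronglyMeasurable
      (ae_of_all _ fun x => ?_)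
    rw [Real.norm_eq_abs, abs_of_nonneg (sq_nonneg _), ← sq_abs]
    calc |I x| ^ 2 ≤ 2 ^ 2 := pow_le_pow_left₀ (abs_nonneg _) (hIbd x) 2
      _ = 4 := by norm_num
  have hofS : ENNReal.ofReal (∫ x, I x ^ 2 ∂μ) = T := by
    rw [ofReal_integral_eq_lintegral_ofReal hIint (ae_of_all _ fun x => sq_nonneg _)]
    refine lintegral_congr fun x => ?_
    rw [← sq_abs (I x), ENNReal.ofReal_pow (abs_nonneg _)]
  have := hofS ▸ hTfinal
  exact (ENNReal.ofReal_le_ofReal_iff hRHS0).mp this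

/-- **Bounded negative moment of `|2η − 1|` implies a margin-type inequality.**
Let `X, X'` be i.i.d. random vectors in `𝒳 ⊆ ℝ^d`, let `η : 𝒳 × 𝒳 → [0, 1]` and
`f, f⁰ : 𝒳 × 𝒳 → ℝ` be measurable with `|f − f⁰| ≤ 2`. Fix `α ∈ (0, 1)` and suppose
`E_{X'} |2η(x, X') − 1|^{−α} ≤ B(α)` for every `x`. Then
`‖f − f⁰‖_c² ≤ B(α)·2^{2−α}·(E[|f(X,X') − f⁰(X,X')|·|2η(X,X') − 1|])^α`; equivalently,
if `Q(f) − Q(f⁰) = E[|f − f⁰|·|2η − 1|]`, then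
`Q(f) − Q(f⁰) ≥ (B(α)·2^{2−α})^{−1/α}·‖f − f⁰‖_c^{2/α}`,
where `‖g‖_c = √(E_X [E_{X'} g(X, X')]²)` is the conditional pseudonorm. -/
theorem negative_moment_implies_margin
    {Ω : Type*} [MeasurableSpace Ω] {P : Measure Ω} [IsProbabilityMeasure P]
    (d : ℕ) (𝒳 : Set (Fin d → ℝ))
    (X X' : Ω → 𝒳) (hXmeas : Measurable X) (hX'meas : Measurable X')
    (hid : Measure.map X P = Measure.map X' P)
    (hindep : IndepFun X X' P)
    (η : 𝒳 × 𝒳 → ℝ) (hηmeas : Measurable η) (hη01 : ∀ q, 0 ≤ η q ∧ η q ≤ 1)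
    (f f0 : 𝒳 × 𝒳 → ℝ) (hfmeas : Measurable f) (hf0meas : Measurable f0)
    (hbd : ∀ q, |f q - f0 q| ≤ 2)
    (α : ℝ) (hα0 : 0 < α) (hα1 : α < 1)
    (B : ℝ) (hB0 : 0 < B)
    -- `E_{X'} |2η(x, X') − 1|^{−α} ≤ B(α)` for every `x ∈ 𝒳`
    (hB : ∀ x : 𝒳,
      ∫⁻ ω', (ENNReal.ofReal |2 * η (x, X' ω') - 1|) ^ (-α) ∂P ≤ ENNReal.ofReal B) :
    -- `‖f − f⁰‖_c² ≤ B(α)·2^{2−α}·(E[|f − f⁰|·|2η − 1|])^α`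
    (∫ ω, (∫ ω', (f (X ω, X' ω') - f0 (X ω, X' ω')) ∂P) ^ 2 ∂P) ≤
      B * 2 ^ (2 - α) *
        (∫ ω, |f (X ω, X' ω) - f0 (X ω, X' ω)| * |2 * η (X ω, X' ω) - 1| ∂P) ^ α ∧
    -- equivalently, in terms of the excess risk `q = Q(f) − Q(f⁰)`
    ∀ q : ℝ,
      q = ∫ ω, |f (X ω, X' ω) - f0 (X ω, X' ω)| * |2 * η (X ω, X' ω) - 1| ∂P →
      (B * 2 ^ (2 - α)) ^ (-(1 / α)) *
          Real.sqrt (∫ ω, (∫ ω', (f (X ω, X' ω') - f0 (X ω, X' ω')) ∂P) ^ 2 ∂P) ^ (2 / α) ≤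
        q := by
  set μ : Measure 𝒳 := P.map X with hμ_def
  have hid' : P.map X' = μ := hid.symm
  haveI : IsProbabilityMeasure μ := Measure.isProbabilityMeasure_map hXmeas.aemeasurable
  set G : 𝒳 × 𝒳 → ℝ := fun p => f p - f0 p with hG_def
  set W : 𝒳 × 𝒳 → ℝ := fun p => |2 * η p - 1| with hW_def
  have hGm : Measurable G := hfmeas.sub hf0meas
  have hWm : Measurable W := ((hηmeas.const_mul 2).sub measurable_const).abs
  have hW0 : ∀ p, 0 ≤ W p := fun p => abs_nonneg _
  have hW1 : ∀ p, W p ≤ 1 := fun p => by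
    have h := hη01 p
    exact abs_le.mpr ⟨by linarith [h.1], by linarith [h.2]⟩
  have hBμ : ∀ x : 𝒳, ∫⁻ y, (ENNReal.ofReal (W (x, y))) ^ (-α) ∂μ ≤ ENNReal.ofReal B := by
    intro x
    have hm1 : Measurable fun y : 𝒳 => ENNReal.ofReal (W (x, y)) ^ (-α) :=
      ((hWm.comp measurable_prodMk_left).ennreal_ofReal).pow measurable_const
    rw [← hid', lintegral_map hm1 hX'meas]
    exact hB x
  have hinner : ∀ ω, (∫ ω', (f (X ω, X' ω') - f0 (X ω, X' ω')) ∂P) = ∫ y, G (X ω, y) ∂μ := by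
    intro ω
    have hm2 : AEStronglyMeasurable (fun y : 𝒳 => G (X ω, y)) (P.map X') :=
      (hGm.comp measurable_prodMk_left).aestronglyMeasurable
    rw [← hid', integral_map hX'meas.aemeasurable hm2]
  have hLHS : (∫ ω, (∫ ω', (f (X ω, X' ω') - f0 (X ω, X' ω')) ∂P) ^ 2 ∂P)
      = ∫ x, (∫ y, G (x, y) ∂μ) ^ 2 ∂μ := by
    rw [show (fun ω => (∫ ω', (f (X ω, X' ω') - f0 (X ω, X' ω')) ∂P) ^ 2)
        = fun ω => (∫ y, G (X ω, y) ∂μ) ^ 2 from funext fun ω => by rw [hinner ω]]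
    have hm3 : AEStronglyMeasurable (fun x : 𝒳 => (∫ y, G (x, y) ∂μ) ^ 2) μ :=
      (hGm.stronglyMeasurable.integral_prod_right'.measurable.pow_const 2).aestronglyMeasurable
    exact (integral_map hXmeas.aemeasurable hm3).symm
  have hmap : P.map (fun ω => (X ω, X' ω)) = μ.prod μ := by
    rw [(indepFun_iff_map_prod_eq_prod_map_map hXmeas.aemeasurable
      hX'meas.aemeasurable).mp hindep, hid']
  have hQeq : (∫ ω, |f (X ω, X' ω) - f0 (X ω, X' ω)| * |2 * η (X ω, X' ω) - 1| ∂P)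
      = ∫ p, |G p| * W p ∂(μ.prod μ) := by
    rw [← hmap]
    have hm4 : AEStronglyMeasurable (fun p : 𝒳 × 𝒳 => |G p| * W p)
        (P.map fun ω => (X ω, X' ω)) :=
      (hGm.abs.mul hWm).aestronglyMeasurable
    exact (integral_map (hXmeas.prodMk hX'meas).aemeasurable hm4).symm
  have key := key_margin μ G W hGm hWm hbd hW0 hW1 hα0 hα1 hB0 hBμ
  constructor
  · rw [hLHS, hQeq]; exact key
  · intro q hq
    have h1 : (∫ x, (∫ y, G (x, y) ∂μ) ^ 2 ∂μ) ≤ B * 2 ^ (2 - α) * q ^ α := by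
      rw [hq, hQeq]; exact key
    rw [hLHS]
    set Sμ := ∫ x, (∫ y, G (x, y) ∂μ) ^ 2 ∂μ with hS_def
    have hS0 : 0 ≤ Sμ := integral_nonneg fun x => sq_nonneg _
    have hq0 : 0 ≤ q := by
      rw [hq]; exact integral_nonneg fun ω => mul_nonneg (abs_nonneg _) (abs_nonneg _)
    set K := B * 2 ^ (2 - α) with hK_def
    have hK0 : 0 < K := mul_pos hB0 (Real.rpow_pos_of_pos (by norm_num) _)
    have hsqrt : Real.sqrt Sμ ^ (2 / α) = Sμ ^ (1 / α) := by
      rw [Real.sqrt_eq_rpow, ← Real.rpow_mul hS0]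
      congr 1
      field_simp
    have hchain : Sμ ^ (1 / α) ≤ K ^ (1 / α) * q := by
      calc Sμ ^ (1 / α) ≤ (K * q ^ α) ^ (1 / α) :=
            Real.rpow_le_rpow hS0 h1 (by positivity)
        _ = K ^ (1 / α) * (q ^ α) ^ (1 / α) :=
            Real.mul_rpow hK0.le (Real.rpow_nonneg hq0 _)
        _ = K ^ (1 / α) * q := by
            rw [← Real.rpow_mul hq0, mul_one_div, div_self hα0.ne', Real.rpow_one]
    calc K ^ (-(1 / α)) * Real.sqrt Sμ ^ (2 / α) = K ^ (-(1 / α)) * Sμ ^ (1 / α) := by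
          rw [hsqrt]
      _ ≤ K ^ (-(1 / α)) * (K ^ (1 / α) * q) :=
          mul_le_mul_of_nonneg_left hchain (Real.rpow_nonneg hK0.le _)
      _ = q := by
          rw [← mul_assoc, ← Real.rpow_add hK0]
          norm_num
end

section
/- Let X' ~ N(0, V) be a Gaussian vector in ℝ^d, let θ_0 ∈ ℝ^d satisfy θ_0^T V θ_0 > 0, let Φ denote the standard normal distribution function, and define η(x,x') = Φ( θ_0^T(x − x') ). Then for every α ∈ (0,1) there exists a positive constant B(α) such that for every x ∈ ℝ^d, E_{X'} |2η(x, X') − 1|^{−α} ≤ B(α), i.e. the bound is uniform in x. -/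
open MeasureTheory ProbabilityTheory Real
open scoped ENNReal NNReal

-- Lemma 1: symmetry
lemma gauss_Iic_zero : gaussianReal 0 1 (Set.Iic 0) = 1/2 := by
  set μ0 := gaussianReal (0:ℝ) 1 with hμ0
  have hmap : μ0.map (fun x => -x) = μ0 := by
    have := gaussianReal_map_const_mul (μ := 0) (v := 1) (-1)
    simp only [neg_one_mul, mul_zero] at this
    convert this using 2
    ext : 1
    simp
  have h1 : μ0 (Set.Iic 0) = μ0 (Set.Ici 0) := by
    conv_lhs => rw [← hmap]
    rw [Measure.map_apply measurable_neg measurableSet_Iic]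
    congr 1
    ext x
    simp
  have h0 : μ0 {(0:ℝ)} = 0 := by
    rw [hμ0, gaussianReal_of_var_ne_zero _ one_ne_zero,
      withDensity_apply _ (measurableSet_singleton 0)]
    rw [Measure.restrict_eq_zero.mpr (by simp)]
    simp
  have h2 : μ0 (Set.Ici 0) = μ0 (Set.Ioi 0) := by
    have : Set.Ici (0:ℝ) = Set.Ioi 0 ∪ {0} := by
      ext x; simp [le_iff_lt_or_eq, or_comm, eq_comm]
    rw [this]
    refine le_antisymm ((measure_union_le _ _).trans (by simp [h0])) (measure_mono (by simp))
  have h3 : μ0 (Set.Iic 0) + μ0 (Set.Ioi 0) = 1 := by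
    have := measure_add_measure_compl (μ := μ0) (measurableSet_Iic (a := (0:ℝ)))
    rwa [Set.compl_Iic, measure_univ] at this
  rw [h1, h2] at h3
  have h4 : 2 * μ0 (Set.Ioi 0) = 1 := by rw [two_mul]; exact h3
  rw [h1, h2, ENNReal.eq_div_iff (by norm_num) (by norm_num)]
  exact h4

noncomputable def gaussC' : ℝ := (Real.sqrt (2*Real.pi))⁻¹ * Real.exp (-2⁻¹)

lemma gaussC'_pos : 0 < gaussC' := by
  unfold gaussC'
  positivity

-- Lemma 2: interval lower bound
lemma gauss_Ioc_lower {a b : ℝ} (ha : -1 ≤ a) (hb : b ≤ 1) (hab : a ≤ b) :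
    ENNReal.ofReal (gaussC' * (b - a)) ≤ gaussianReal 0 1 (Set.Ioc a b) := by
  rw [gaussianReal_of_var_ne_zero _ one_ne_zero, withDensity_apply _ measurableSet_Ioc]
  calc ENNReal.ofReal (gaussC' * (b - a))
      = ENNReal.ofReal gaussC' * volume (Set.Ioc a b) := by
        rw [Real.volume_Ioc, ← ENNReal.ofReal_mul gaussC'_pos.le]
    _ = ∫⁻ _x in Set.Ioc a b, ENNReal.ofReal gaussC' := by rw [setLIntegral_const, mul_comm]
    _ ≤ ∫⁻ x in Set.Ioc a b, gaussianPDF 0 1 x := by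
        refine setLIntegral_mono (measurable_gaussianPDF 0 1) (fun x hx => ?_)
        refine ENNReal.ofReal_le_ofReal ?_
        unfold gaussC' ProbabilityTheory.gaussianPDFReal
        simp only [NNReal.coe_one, mul_one, sub_zero]
        have h1 : |x| ≤ 1 := abs_le.mpr ⟨le_trans ha hx.1.le, le_trans hx.2 hb⟩
        have h2 : x^2 ≤ 1 := by nlinarith [abs_nonneg x, sq_abs x]
        refine mul_le_mul_of_nonneg_left ?_ (by positivity)
        exact Real.exp_le_exp.mpr (by rw [neg_div, neg_le_neg_iff]; linarith)

-- Key lemma: |2Φ(w) - 1| ≥ 2 c' min(|w|,1)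
lemma gauss_cdf_lower (Φ : ℝ → ℝ) (hΦ : ∀ t, Φ t = (gaussianReal 0 1 (Set.Iic t)).toReal)
    (w : ℝ) : 2 * gaussC' * min |w| 1 ≤ |2 * Φ w - 1| := by
  set μ0 := gaussianReal (0:ℝ) 1 with hμ0
  have hΦ0 : Φ 0 = 1/2 := by rw [hΦ, gauss_Iic_zero]; simp
  have hdiff : ∀ a b : ℝ, a ≤ b → Φ b - Φ a = (μ0 (Set.Ioc a b)).toReal := by
    intro a b hab
    have hsplit : μ0 (Set.Iic b) = μ0 (Set.Iic a) + μ0 (Set.Ioc a b) := by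
      rw [← measure_union (by exact Set.Iic_disjoint_Ioc le_rfl) measurableSet_Ioc,
        Set.Iic_union_Ioc_eq_Iic hab]
    rw [hΦ, hΦ, hsplit, ENNReal.toReal_add (measure_ne_top _ _) (measure_ne_top _ _)]
    ring
  rcases le_or_gt 0 w with hw | hw
  · -- w ≥ 0
    have key : Φ w - Φ 0 = (μ0 (Set.Ioc 0 w)).toReal := hdiff 0 w hw
    set m := min w 1 with hm
    have hm0 : 0 ≤ m := le_min hw zero_le_one
    have h1 : ENNReal.ofReal (gaussC' * m) ≤ μ0 (Set.Ioc 0 m) := by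
      simpa using gauss_Ioc_lower (a := 0) (b := m) (by norm_num) (min_le_right _ _) hm0
    have h2 : μ0 (Set.Ioc 0 m) ≤ μ0 (Set.Ioc 0 w) :=
      measure_mono (Set.Ioc_subset_Ioc le_rfl (min_le_left _ _))
    have h3 : gaussC' * m ≤ (μ0 (Set.Ioc 0 w)).toReal := by
      have := (h1.trans h2)
      calc gaussC' * m = (ENNReal.ofReal (gaussC' * m)).toReal := by
            rw [ENNReal.toReal_ofReal (mul_nonneg gaussC'_pos.le hm0)]
        _ ≤ _ := ENNReal.toReal_mono (measure_ne_top _ _) this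
    have habs : |2 * Φ w - 1| = 2 * Φ w - 1 := by
      rw [abs_of_nonneg]
      have : Φ 0 ≤ Φ w := by linarith [key, ENNReal.toReal_nonneg (a := μ0 (Set.Ioc 0 w))]
      linarith [hΦ0]
    rw [habs, abs_of_nonneg hw]
    have : 2 * Φ w - 1 = 2 * (Φ w - Φ 0) := by rw [hΦ0]; ring
    rw [this, key]
    calc 2 * gaussC' * min w 1 = 2 * (gaussC' * m) := by rw [hm]; ring
      _ ≤ 2 * (μ0 (Set.Ioc 0 w)).toReal := by linarith
  · -- w < 0
    have key : Φ 0 - Φ w = (μ0 (Set.Ioc w 0)).toReal := hdiff w 0 hw.le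
    set m := min (-w) 1 with hm
    have hm0 : 0 ≤ m := le_min (by linarith) zero_le_one
    have h1 : ENNReal.ofReal (gaussC' * m) ≤ μ0 (Set.Ioc (-m) 0) := by
      simpa using gauss_Ioc_lower (a := -m) (b := 0) (by linarith [min_le_right (-w) (1:ℝ)]) zero_le_one
        (by linarith)
    have h2 : μ0 (Set.Ioc (-m) 0) ≤ μ0 (Set.Ioc w 0) := by
      refine measure_mono (Set.Ioc_subset_Ioc ?_ le_rfl)
      have : m ≤ -w := min_le_left _ _
      linarith
    have h3 : gaussC' * m ≤ (μ0 (Set.Ioc w 0)).toReal := by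
      have := (h1.trans h2)
      calc gaussC' * m = (ENNReal.ofReal (gaussC' * m)).toReal := by
            rw [ENNReal.toReal_ofReal (mul_nonneg gaussC'_pos.le hm0)]
        _ ≤ _ := ENNReal.toReal_mono (measure_ne_top _ _) this
    have habs : |2 * Φ w - 1| = 1 - 2 * Φ w := by
      rw [abs_of_nonpos]
      · ring
      have : Φ w ≤ Φ 0 := by linarith [key, ENNReal.toReal_nonneg (a := μ0 (Set.Ioc w 0))]
      linarith [hΦ0]
    rw [habs, abs_of_neg hw]
    have : 1 - 2 * Φ w = 2 * (Φ 0 - Φ w) := by rw [hΦ0]; ring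
    rw [this, key]
    calc 2 * gaussC' * min (-w) 1 = 2 * (gaussC' * m) := by rw [hm]; ring
      _ ≤ 2 * (μ0 (Set.Ioc w 0)).toReal := by linarith

lemma sing_lintegral_lt_top {c α : ℝ} (hc : 0 < c) (hα0 : 0 < α) (hα1 : α < 1) :
    ∫⁻ w, Set.indicator (Set.Icc (-1:ℝ) 1)
      (fun w => (ENNReal.ofReal (c * |w|)) ^ (-α)) w < ⊤ := by
  set g : ℝ → ℝ≥0∞ := fun w => (ENNReal.ofReal (c * |w|)) ^ (-α) with hg
  have hgm : Measurable g := by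
    apply Measurable.pow_const
    exact ENNReal.measurable_ofReal.comp (measurable_const.mul measurable_abs)
  rw [lintegral_indicator measurableSet_Icc]
  have hJ : ∫⁻ w in Set.Icc (0:ℝ) 1, g w < ⊤ := by
    rw [← Measure.restrict_congr_set Ioc_ae_eq_Icc]
    have heq : ∫⁻ w in Set.Ioc (0:ℝ) 1, g w
        = ∫⁻ w in Set.Ioc (0:ℝ) 1, ENNReal.ofReal ((c * w) ^ (-α)) := by
      refine setLIntegral_congr_fun measurableSet_Ioc (fun w hw => ?_)
      rw [hg]
      simp only
      rw [abs_of_pos hw.1, ENNReal.ofReal_rpow_of_pos (mul_pos hc hw.1)]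
    rw [heq]
    have h0 : IntegrableOn (fun w => w ^ (-α)) (Set.Ioc (0:ℝ) 1) := by
      rw [← intervalIntegrable_iff_integrableOn_Ioc_of_le zero_le_one]
      exact intervalIntegral.intervalIntegrable_rpow' (by linarith)
    have h1 : IntegrableOn (fun w => (c * w) ^ (-α)) (Set.Ioc (0:ℝ) 1) := by
      refine IntegrableOn.congr_fun (h0.const_mul (c ^ (-α))) (fun w hw => ?_) measurableSet_Ioc
      rw [← Real.mul_rpow hc.le hw.1.le]
    exact h1.lintegral_lt_top
  have hsplit : Set.Icc (-1:ℝ) 1 = Set.Icc (-1:ℝ) 0 ∪ Set.Ioc 0 1 :=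
    (Set.Icc_union_Ioc_eq_Icc (by norm_num) (by norm_num)).symm
  rw [hsplit, lintegral_union measurableSet_Ioc
    (by exact Set.disjoint_left.mpr fun x hx hx' => absurd hx.2 (not_le.mpr hx'.1))]
  have hrefl : ∫⁻ w in Set.Icc (-1:ℝ) 0, g w = ∫⁻ w in Set.Icc (0:ℝ) 1, g w := by
    have hpre : (Neg.neg : ℝ → ℝ) ⁻¹' Set.Icc (-1:ℝ) 0 = Set.Icc (0:ℝ) 1 := by
      ext x
      simp only [Set.mem_preimage, Set.mem_Icc]
      constructor <;> intro h <;> constructor <;> linarith [h.1, h.2]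
    have := (Measure.measurePreserving_neg (volume : Measure ℝ)).setLIntegral_comp_preimage_emb
      (MeasurableEquiv.neg ℝ).measurableEmbedding g (Set.Icc (-1:ℝ) 0)
    rw [hpre] at this
    rw [← this]
    refine setLIntegral_congr_fun measurableSet_Icc (fun w _ => ?_)
    simp [hg, abs_neg]
  rw [hrefl]
  have hle : ∫⁻ w in Set.Ioc (0:ℝ) 1, g w ≤ ∫⁻ w in Set.Icc (0:ℝ) 1, g w :=
    lintegral_mono_set Set.Ioc_subset_Icc_self
  calc (∫⁻ w in Set.Icc (0:ℝ) 1, g w) + ∫⁻ w in Set.Ioc (0:ℝ) 1, g w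
      ≤ (∫⁻ w in Set.Icc (0:ℝ) 1, g w) + ∫⁻ w in Set.Icc (0:ℝ) 1, g w := by gcongr
    _ < ⊤ := by
      rw [← two_mul]
      exact ENNReal.mul_lt_top (by norm_num) hJ


/-- **Uniform bounded negative moments in the Gaussian linear model.**
Let `X' ~ N(0, V)` be a Gaussian vector in `ℝ^d` (characterized by all of its linear
functionals `θᵀX'` being `N(0, θᵀVθ)`), let `θ₀` satisfy `θ₀ᵀVθ₀ > 0`, let `Φ` be the
standard normal distribution function and `η(x, x') = Φ(θ₀ᵀ(x − x'))`. Then for every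
`α ∈ (0, 1)` there is a constant `B(α) > 0` such that for every `x ∈ ℝ^d`,
`E_{X'} |2η(x, X') − 1|^{−α} ≤ B(α)`, i.e. the bound is uniform in `x`. -/
theorem gaussian_uniform_negative_moment
    {Ω : Type*} [MeasurableSpace Ω] {P : Measure Ω} [IsProbabilityMeasure P]
    (d : ℕ)
    (X' : Ω → Fin d → ℝ) (hX'meas : Measurable X')
    (V : Matrix (Fin d) (Fin d) ℝ)
    -- `X' ~ N(0, V)`: every linear functional `θᵀX'` is `N(0, θᵀVθ)`
    (hGauss : ∀ θ : Fin d → ℝ,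
      Measure.map (fun ω => ∑ i : Fin d, θ i * X' ω i) P =
        gaussianReal 0 (∑ i : Fin d, ∑ j : Fin d, θ i * V i j * θ j).toNNReal)
    (θ0 : Fin d → ℝ)
    (hθ0 : 0 < ∑ i : Fin d, ∑ j : Fin d, θ0 i * V i j * θ0 j)
    -- the standard normal distribution function `Φ`
    (Φ : ℝ → ℝ) (hΦ : ∀ t, Φ t = (gaussianReal 0 1 (Set.Iic t)).toReal)
    -- `η(x, x') = Φ(θ₀ᵀ(x − x'))`
    (η : (Fin d → ℝ) × (Fin d → ℝ) → ℝ)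
    (hη : ∀ x x' : Fin d → ℝ, η (x, x') = Φ (∑ i : Fin d, θ0 i * (x i - x' i)))
    (α : ℝ) (hα0 : 0 < α) (hα1 : α < 1) :
    ∃ B : ℝ, 0 < B ∧ ∀ x : Fin d → ℝ,
      ∫⁻ ω, (ENNReal.ofReal |2 * η (x, X' ω) - 1|) ^ (-α) ∂P ≤ ENNReal.ofReal B := by
  set v : ℝ≥0 := (∑ i : Fin d, ∑ j : Fin d, θ0 i * V i j * θ0 j).toNNReal with hv
  have hv0 : v ≠ 0 := (Real.toNNReal_pos.mpr hθ0).ne'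
  set c : ℝ := 2 * gaussC' with hc
  have hcpos : 0 < c := by rw [hc]; have := gaussC'_pos; positivity
  set D : ℝ := (Real.sqrt (2 * Real.pi * (v:ℝ)))⁻¹ with hD
  have hΦmeas : Measurable Φ := by
    refine Monotone.measurable (fun s t h => ?_)
    rw [hΦ, hΦ]
    exact ENNReal.toReal_mono (measure_ne_top _ _)
      (measure_mono (Set.Iic_subset_Iic.mpr h))
  set f : ℝ → ℝ≥0∞ := fun w => (ENNReal.ofReal |2 * Φ w - 1|) ^ (-α) with hf
  have hfmeas : Measurable f :=
    (ENNReal.measurable_ofReal.comp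
      ((measurable_const.mul hΦmeas).sub measurable_const).abs).pow_const _
  set G : ℝ → ℝ≥0∞ := Set.indicator (Set.Icc (-1:ℝ) 1)
    (fun w => (ENNReal.ofReal (c * |w|)) ^ (-α)) with hG
  have hGmeas : Measurable G := by
    refine Measurable.indicator ?_ measurableSet_Icc
    exact (ENNReal.measurable_ofReal.comp (measurable_const.mul measurable_abs)).pow_const _
  have hanti : ∀ {a b : ℝ≥0∞}, a ≤ b → b ^ (-α) ≤ a ^ (-α) := by
    intro a b h
    rw [ENNReal.rpow_neg, ENNReal.rpow_neg]
    exact ENNReal.inv_le_inv.mpr (ENNReal.rpow_le_rpow h hα0.le)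
  have hfG : ∀ w, f w ≤ (ENNReal.ofReal c) ^ (-α) + G w := by
    intro w
    have hkey := gauss_cdf_lower Φ hΦ w
    rcases le_or_gt |w| 1 with h1 | h1
    · have hGw : G w = (ENNReal.ofReal (c * |w|)) ^ (-α) := by
        rw [hG]
        exact Set.indicator_of_mem (Set.mem_Icc.mpr (abs_le.mp h1)) _
      have : f w ≤ (ENNReal.ofReal (c * |w|)) ^ (-α) := by
        refine hanti (ENNReal.ofReal_le_ofReal ?_)
        rw [min_eq_left h1] at hkey
        exact hkey
      rw [hGw] at *
      exact this.trans le_add_self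
    · have : f w ≤ (ENNReal.ofReal c) ^ (-α) := by
        refine hanti (ENNReal.ofReal_le_ofReal ?_)
        rw [min_eq_right h1.le] at hkey
        calc c = c * 1 := (mul_one c).symm
          _ ≤ |2 * Φ w - 1| := hkey
      exact this.trans le_self_add
  set I : ℝ≥0∞ := ∫⁻ w, G w with hI
  have hIlt : I < ⊤ := sing_lintegral_lt_top hcpos hα0 hα1
  set K : ℝ≥0∞ := (ENNReal.ofReal c) ^ (-α) + ENNReal.ofReal D * I with hK
  have hKne : K ≠ ⊤ := by
    refine ENNReal.add_ne_top.mpr ⟨?_, ?_⟩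
    · rw [ENNReal.rpow_neg]
      exact ENNReal.inv_ne_top.mpr
        (ENNReal.rpow_pos (ENNReal.ofReal_pos.mpr hcpos) ENNReal.ofReal_ne_top).ne'
    · exact ENNReal.mul_ne_top ENNReal.ofReal_ne_top hIlt.ne
  refine ⟨K.toReal + 1, by positivity, fun x => ?_⟩
  set T : Ω → ℝ := fun ω => ∑ i : Fin d, θ0 i * X' ω i with hT
  have hTmeas : Measurable T := by
    refine Finset.measurable_sum _ (fun i _ => ?_)
    exact measurable_const.mul ((measurable_pi_apply i).comp hX'meas)
  set t : ℝ := ∑ i : Fin d, θ0 i * x i with ht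
  have hcompf : Measurable fun z : ℝ => f (t - z) :=
    hfmeas.comp (measurable_const.sub measurable_id)
  have hcompG : Measurable fun z : ℝ => G (t - z) :=
    hGmeas.comp (measurable_const.sub measurable_id)
  have hint : ∀ ω, (ENNReal.ofReal |2 * η (x, X' ω) - 1|) ^ (-α) = f (t - T ω) := by
    intro ω
    rw [hη, hf]
    have harg : ∑ i : Fin d, θ0 i * (x i - X' ω i) = t - T ω := by
      rw [ht, hT]
      simp [mul_sub, Finset.sum_sub_distrib]
    rw [harg]
  simp_rw [hint]
  have step1 : ∫⁻ ω, f (t - T ω) ∂P = ∫⁻ z, f (t - z) ∂(gaussianReal 0 v) := by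
    rw [← hGauss θ0, lintegral_map hcompf hTmeas]
  rw [step1]
  have step3 : ∫⁻ z, G (t - z) ∂(gaussianReal 0 v) ≤ ENNReal.ofReal D * I := by
    rw [gaussianReal_of_var_ne_zero _ hv0,
      lintegral_withDensity_eq_lintegral_mul _ (measurable_gaussianPDF _ _) hcompG]
    have hpdf : ∀ z : ℝ, gaussianPDF 0 v z ≤ ENNReal.ofReal D := by
      intro z
      refine ENNReal.ofReal_le_ofReal ?_
      unfold ProbabilityTheory.gaussianPDFReal
      rw [hD]
      calc (Real.sqrt (2 * Real.pi * (v:ℝ)))⁻¹ * Real.exp (-(z - 0)^2 / (2 * (v:ℝ)))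
          ≤ (Real.sqrt (2 * Real.pi * (v:ℝ)))⁻¹ * 1 := by
            refine mul_le_mul_of_nonneg_left ?_ (by positivity)
            refine Real.exp_le_one_iff.mpr ?_
            rw [neg_div]
            simp only [neg_nonpos]
            positivity
        _ = (Real.sqrt (2 * Real.pi * (v:ℝ)))⁻¹ := mul_one _
    calc ∫⁻ z, (gaussianPDF 0 v * fun z => G (t - z)) z
        ≤ ∫⁻ z, ENNReal.ofReal D * G (t - z) := by
          refine lintegral_mono fun z => ?_
          simp only [Pi.mul_apply]
          exact mul_le_mul_left (hpdf z) _
      _ = ENNReal.ofReal D * ∫⁻ z, G (t - z) := lintegral_const_mul _ hcompG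
      _ = ENNReal.ofReal D * I := by
          rw [(Measure.measurePreserving_sub_left volume t).lintegral_comp hGmeas]
  calc ∫⁻ z, f (t - z) ∂(gaussianReal 0 v)
      ≤ ∫⁻ z, ((ENNReal.ofReal c) ^ (-α) + G (t - z)) ∂(gaussianReal 0 v) :=
        lintegral_mono fun z => hfG _
    _ = (ENNReal.ofReal c) ^ (-α) + ∫⁻ z, G (t - z) ∂(gaussianReal 0 v) := by
        rw [lintegral_add_left measurable_const, lintegral_const, measure_univ, mul_one]
    _ ≤ K := by rw [hK]; exact add_le_add le_rfl step3
    _ = ENNReal.ofReal K.toReal := (ENNReal.ofReal_toReal hKne).symm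
    _ ≤ ENNReal.ofReal (K.toReal + 1) := ENNReal.ofReal_le_ofReal (by linarith)
end
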